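/- arXiv:2112.07509 — 5 statements merged into one kernel-verified Lean document; each statement's English description precedes it below -/
import Mathlib

section
/- Two distinct non-empty sequences s, s' ∈ 𝒮 are comparable if and only if neither of them is a prefix of the other. -/
/-!
Formalization of the ranked-delegation (liquid democracy) setting of
"Liquid Democracy with Ranked Delegations".

Vertices are natural numbers.  An instance carries the vertex set `V`,
the edge set `E`, the distinguished set `C` of casting voters (which have
no outgoing edges), and a rank function such that for every vertex the
ranks of its outgoing edges are exactly `{1, ..., outdeg}`.
-/

namespace RankedDelegation

/-- A ranked delegation instance `(G, r)`. -/
structure Instance where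
  V : Finset ℕ
  E : Finset (ℕ × ℕ)
  C : Finset ℕ
  C_sub : C ⊆ V
  edge_mem : ∀ e ∈ E, e.1 ∈ V ∧ e.2 ∈ V
  C_no_out : ∀ e ∈ E, e.1 ∉ C
  rank : ℕ × ℕ → ℕ
  rank_prop : ∀ v ∈ V,
    (E.filter (fun e => e.1 = v)).image rank =
      Finset.Icc 1 (E.filter (fun e => e.1 = v)).card

/-- A simple path from `v` to a casting voter, represented by its list of
vertices (so it has at least one edge, i.e. at least two vertices). -/
def IsDelegPath (G : Instance) (v : ℕ) (p : List ℕ) : Prop :=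
  2 ≤ p.length ∧ p.head? = some v ∧ p.Nodup ∧
  (∀ e ∈ p.zip p.tail, e ∈ G.E) ∧
  (∃ c ∈ G.C, p.getLast? = some c)

/-- Delegating voters: members of `V` admitting a path to a casting voter.
(Casting voters have no outgoing edges, so they are never `Delegating`.) -/
def Delegating (G : Instance) (v : ℕ) : Prop :=
  v ∈ G.V ∧ ∃ p, IsDelegPath G v p

/-- Isolated voters: neither casting nor delegating. -/
def Isolated (G : Instance) (v : ℕ) : Prop :=
  v ∈ G.V ∧ v ∉ G.C ∧ ¬ Delegating G v

/-- The rank sequence `s(P)` of a path `P`. -/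
def seqOf (G : Instance) (p : List ℕ) : List ℕ :=
  (p.zip p.tail).map G.rank

/-- `S_v`, the set of rank sequences of paths from `v` to casting voters. -/
def Seqs (G : Instance) (v : ℕ) : Set (List ℕ) :=
  {s | ∃ p, IsDelegPath G v p ∧ seqOf G p = s}

/-- Membership in `𝒮`: all entries are positive. -/
def PosSeq (s : List ℕ) : Prop := ∀ x ∈ s, 1 ≤ x

/-- Two sequences are comparable if some instance realizes `S_v = {s, s'}`. -/
def Comparable (s s' : List ℕ) : Prop :=
  ∃ (G : Instance) (v : ℕ), Seqs G v = {s, s'}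

/-- A set of sequences is comparable if its elements are pairwise comparable. -/
def ComparableSet (S : Set (List ℕ)) : Prop := S.Pairwise Comparable

/-- `R` restricted to any comparable subset of `𝒮` is a (strict) linear order. -/
def LinearOnComparable (R : List ℕ → List ℕ → Prop) : Prop :=
  ∀ S : Set (List ℕ), ComparableSet S →
    (∀ s ∈ S, ¬ R s s) ∧
    (∀ s ∈ S, ∀ t ∈ S, ∀ u ∈ S, R s t → R t u → R s u) ∧
    (∀ s ∈ S, ∀ t ∈ S, s ≠ t → R s t ∨ R t s)

/-- `s` is the `R`-maximum (i.e. `R`-best) element of `S`. -/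
def IsMaxOf (R : List ℕ → List ℕ → Prop) (S : Set (List ℕ)) (s : List ℕ) : Prop :=
  s ∈ S ∧ ∀ t ∈ S, t ≠ s → R s t

/-- A delegation rule assigns to every instance and every delegating voter a
path from that voter to a casting voter. -/
structure DelegationRule where
  path : Instance → ℕ → List ℕ
  valid : ∀ G v, Delegating G v → IsDelegPath G v (path G v)

/-- `f` is a sequence rule induced by the relation `R`. -/
def IsSequenceRule (f : DelegationRule) (R : List ℕ → List ℕ → Prop) : Prop :=
  LinearOnComparable R ∧
  ∀ (G : Instance) (v : ℕ), Delegating G v →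
    IsMaxOf R (Seqs G v) (seqOf G (f.path G v))

/-- Confluence: in the union of all selected paths, every delegating voter
has outdegree exactly one. -/
def Confluent (f : DelegationRule) : Prop :=
  ∀ (G : Instance) (v : ℕ), Delegating G v →
    ∃! w : ℕ, ∃ u : ℕ, Delegating G u ∧
      (v, w) ∈ (f.path G u).zip (f.path G u).tail

/-- The (strict) lexicographic order `▷_lex` ("better than"). -/
def lexRel (s s' : List ℕ) : Prop := List.Lex (· < ·) s s'

/-- The order inducing breadth-first delegation: shorter first, ties by lex. -/
def bfdRel (s s' : List ℕ) : Prop :=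
  s.length < s'.length ∨ (s.length = s'.length ∧ lexRel s s')

/-- The order inducing MinSum: smaller sum of ranks first, ties by lex. -/
def minSumRel (s s' : List ℕ) : Prop :=
  s.sum < s'.sum ∨ (s.sum = s'.sum ∧ lexRel s s')

/-- `σ(s)`: the entries of `s` sorted in non-increasing order. -/
def sortDesc (s : List ℕ) : List ℕ := ((s : Multiset ℕ).sort (· ≤ ·)).reverse

/-- The order `▷_σ` inducing Leximax. -/
def leximaxRel (s s' : List ℕ) : Prop :=
  lexRel (sortDesc s) (sortDesc s') ∨ (sortDesc s = sortDesc s' ∧ lexRel s s')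

/-- The set `F` of minimum-rank edges with head in `A` and tail outside `A`. -/
def diffF (G : Instance) (A : Finset ℕ) : Finset (ℕ × ℕ) :=
  G.E.filter (fun e => e.2 ∈ A ∧ e.1 ∉ A ∧
    ∀ e' ∈ G.E, e'.2 ∈ A → e'.1 ∉ A → G.rank e ≤ G.rank e')

/-- The set of assigned voters after `k` rounds of the diffusion process
(initially the casting voters). -/
def diffA (G : Instance) : ℕ → Finset ℕ
  | 0 => G.C
  | k + 1 => diffA G k ∪ (diffF G (diffA G k)).image Prod.fst

/-- `f` is the Diffusion rule: every delegating voter `v` is assigned, at the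
round where it acquires a minimum-rank edge `(v, w)` into the assigned set,
the path consisting of `(v, w)` followed by the path of `w`. -/
def IsDiffusion (f : DelegationRule) : Prop :=
  ∀ (G : Instance) (v : ℕ), Delegating G v →
    ∃ (k : ℕ) (w : ℕ), (v, w) ∈ diffF G (diffA G k) ∧
      ((w ∈ G.C ∧ f.path G v = [v, w]) ∨
       (Delegating G w ∧ f.path G v = v :: f.path G w))

/-- Maximum entry of a sequence (0 for the empty sequence, by convention). -/
def maxR (s : List ℕ) : ℕ := s.foldr max 0

/-- Fuelled version of the diffusion order on sequences without a joint
prefix; the fuel only has to exceed the length of the first argument. -/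
def diffRelAux : ℕ → List ℕ → List ℕ → Prop
  | 0, _, _ => False
  | n + 1, s, s' =>
    maxR s < maxR s' ∨
    (maxR s = maxR s' ∧ s.count (maxR s) < s'.count (maxR s')) ∨
    (maxR s = maxR s' ∧ s.count (maxR s) = s'.count (maxR s') ∧
      (s.takeWhile (fun x => x ≠ maxR s) = [] ∨
        diffRelAux n (s.takeWhile (fun x => x ≠ maxR s))
          (s'.takeWhile (fun x => x ≠ maxR s'))))

/-- The diffusion order `▷_diff` for sequences with no joint prefix. -/
def diffRel0 (s s' : List ℕ) : Prop := diffRelAux (s.length + 1) s s'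

/-- Strip the longest common prefix of two sequences. -/
def stripCP : List ℕ → List ℕ → List ℕ × List ℕ
  | a :: s, b :: s' => if a = b then stripCP s s' else (a :: s, b :: s')
  | s, s' => (s, s')

/-- The diffusion order `▷_diff`. -/
def diffRel (s s' : List ℕ) : Prop :=
  diffRel0 (stripCP s s').1 (stripCP s s').2

/-- The relative voting weight `ω_f(G, r, c)` of a voter `c`. -/
noncomputable def weight (f : DelegationRule) (G : Instance) (c : ℕ) : ℚ :=
  ((Set.ncard {d | Delegating G d ∧ (f.path G d).getLast? = some c} : ℚ) + 1) /
    ((G.C.card : ℚ) + (Set.ncard {d | Delegating G d} : ℚ))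

/-- Guru-participation: deleting the outgoing edges of a delegating voter `v`
(keeping the casting voters unchanged) does not decrease the relative weight
of any casting voter other than `v`'s representative. -/
def GuruParticipation (f : DelegationRule) : Prop :=
  ∀ (G G' : Instance) (v c : ℕ),
    Delegating G v → (f.path G v).getLast? = some c →
    G'.V = G.V → G'.C = G.C → G'.rank = G.rank →
    G'.E = G.E.filter (fun e => e.1 ≠ v) →
    ∀ u ∈ G.C, u ≠ c → weight f G u ≤ weight f G' u

/-- Copy-robustness: if a delegating voter `v` is assigned a path of length
one ending in the casting voter `c`, then turning `v` into a casting voter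
(deleting its outgoing edges) preserves the joint weight of `v` and `c`. -/
def CopyRobust (f : DelegationRule) : Prop :=
  ∀ (G G' : Instance) (v c : ℕ),
    Delegating G v → (f.path G v).length = 2 →
    (f.path G v).getLast? = some c →
    G'.V = G.V → G'.C = insert v G.C → G'.rank = G.rank →
    G'.E = G.E.filter (fun e => e.1 ≠ v) →
    weight f G c = weight f G' c + weight f G' v

/-- A directed cycle through the edge set `B`, given as a nonempty list of
consecutive edges whose last edge returns to the head of the first one. -/
def IsEdgeCycle (B : Finset (ℕ × ℕ)) (l : List (ℕ × ℕ)) : Prop :=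
  l ≠ [] ∧ (∀ e ∈ l, e ∈ B) ∧ List.Chain' (fun e e' => e.2 = e'.1) l ∧
  ∃ e₁ e₂, l.head? = some e₁ ∧ l.getLast? = some e₂ ∧ e₂.2 = e₁.1

def Acyclic (B : Finset (ℕ × ℕ)) : Prop := ¬ ∃ l, IsEdgeCycle B l

/-- Edges of the reduced graph `Ḡ`: edges of `G` between voters of `C ∪ D`. -/
def InReduced (G : Instance) (e : ℕ × ℕ) : Prop :=
  e ∈ G.E ∧ (e.1 ∈ G.C ∨ Delegating G e.1) ∧ (e.2 ∈ G.C ∨ Delegating G e.2)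

/-- A `C`-branching in the reduced graph: an acyclic set of reduced edges in
which every delegating voter has outdegree exactly one. -/
def IsCBranching (G : Instance) (B : Finset (ℕ × ℕ)) : Prop :=
  (∀ e ∈ B, InReduced G e) ∧ Acyclic B ∧
  ∀ v : ℕ, Delegating G v → ∃! w : ℕ, (v, w) ∈ B

/-- The Borda score of a branching: the sum of the ranks of its edges. -/
def score (G : Instance) (B : Finset (ℕ × ℕ)) : ℕ := ∑ e ∈ B, G.rank e

/-- The rank of the (unique) outgoing edge of `v` in `B` (0 if none). -/
def rankOut (G : Instance) (B : Finset (ℕ × ℕ)) (v : ℕ) : ℕ :=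
  ∑ e ∈ B.filter (fun e => e.1 = v), G.rank e

/-- Priority-order tie-breaking: `B` is preferred to `B'` if some (delegating)
voter `v₀` gets a strictly smaller rank in `B`, while all delegating voters
with smaller priority get equal ranks in `B` and `B'`. -/
def PrioPref (G : Instance) (π : ℕ → ℕ) (B B' : Finset (ℕ × ℕ)) : Prop :=
  ∃ v₀ : ℕ, Delegating G v₀ ∧ rankOut G B v₀ < rankOut G B' v₀ ∧
    ∀ v : ℕ, Delegating G v → π v < π v₀ → rankOut G B v = rankOut G B' v

/-- `f` is BordaBranching with priority order `π`: on every instance the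
paths of `f` are read off from a rank-sum-minimal `C`-branching which is
moreover preferred (w.r.t. `π`) to every other minimal `C`-branching. -/
def IsBordaBranching (f : DelegationRule) (π : ℕ → ℕ) : Prop :=
  Function.Injective π ∧
  ∀ G : Instance, ∃ B : Finset (ℕ × ℕ), IsCBranching G B ∧
    (∀ B', IsCBranching G B' → score G B ≤ score G B') ∧
    (∀ B', IsCBranching G B' → score G B' = score G B → B' ≠ B → PrioPref G π B B') ∧
    (∀ v : ℕ, Delegating G v → ∀ e ∈ (f.path G v).zip (f.path G v).tail, e ∈ B)

/-- Weakly lexicographic: on comparable sequences of equal length differing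
only in the last entry, `R` agrees with the lexicographic order. -/
def WeaklyLex (R : List ℕ → List ℕ → Prop) : Prop :=
  ∀ (t : List ℕ) (a b : ℕ), Comparable (t ++ [a]) (t ++ [b]) →
    (R (t ++ [a]) (t ++ [b]) ↔ lexRel (t ++ [a]) (t ++ [b]))

/-- Strongly lexicographic: on comparable sequences of equal length, `R`
agrees with the lexicographic order. -/
def StronglyLex (R : List ℕ → List ℕ → Prop) : Prop :=
  ∀ s s' : List ℕ, Comparable s s' → s.length = s'.length →
    (R s s' ↔ lexRel s s')

/-- Rank-awareness: among comparable sequences, one with a strictly smaller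
maximum entry is preferred. -/
def RankAware (R : List ℕ → List ℕ → Prop) : Prop :=
  ∀ s s' : List ℕ, Comparable s s' → maxR s < maxR s' → R s s'

/-- Two sequences have no joint prefix (their heads differ, if any). -/
def NoJointPrefix (s s' : List ℕ) : Prop :=
  ∀ a : ℕ, ¬ (s.head? = some a ∧ s'.head? = some a)

/-- Truncation: comparisons may be decided on the parts before a dominating
joint entry `x`. -/
def Truncation (R : List ℕ → List ℕ → Prop) : Prop :=
  ∀ s s' t t' : List ℕ, PosSeq s → PosSeq s' → PosSeq t → PosSeq t' →
    Comparable s s' → NoJointPrefix s s' →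
    ∀ x : ℕ, 1 ≤ x → maxR t < x → maxR t' < x →
    R (s ++ x :: t) (s' ++ x :: t') → R s s'

/-! ### auxiliary lemmas -/

lemma rank_injOn (G : Instance) (u : ℕ) (hu : u ∈ G.V) :
    Set.InjOn G.rank (G.E.filter (fun e => e.1 = u)) := by
  rw [← Finset.card_image_iff]
  rw [G.rank_prop u hu, Nat.card_Icc]
  omega

lemma seqOf_length (G : Instance) (p : List ℕ) : (seqOf G p).length = p.length - 1 := by
  simp only [seqOf, List.length_map, List.length_zip, List.length_tail]
  omega

/-- common step lemma: same head + same rank sequence prefix forces path prefix -/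
lemma path_prefix (G : Instance) : ∀ (p p' : List ℕ), p ≠ [] → p.head? = p'.head? →
    (∀ e ∈ p.zip p.tail, e ∈ G.E) → (∀ e ∈ p'.zip p'.tail, e ∈ G.E) →
    seqOf G p <+: seqOf G p' → p <+: p'
  | [], _, h, _, _, _, _ => absurd rfl h
  | [u], p', _, hh, _, _, _ => by
    match p' with
    | w :: t =>
      simp only [List.head?] at hh
      cases hh
      exact ⟨t, rfl⟩
  | u :: w :: rest, p', _, hh, hE, hE', hpre => by
    match p', hh with
    | u' :: p't, hh =>
      simp only [List.head?, Option.some.injEq] at hh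
      subst hh
      have hsp : seqOf G (u :: w :: rest) = G.rank (u, w) :: seqOf G (w :: rest) := rfl
      match p't with
      | [] => simp [seqOf, hsp] at hpre
      | w' :: rest' =>
        have hsp' : seqOf G (u :: w' :: rest') = G.rank (u, w') :: seqOf G (w' :: rest') := rfl
        rw [hsp, hsp'] at hpre
        rw [List.cons_prefix_cons] at hpre
        obtain ⟨hr, hpre⟩ := hpre
        have he : (u, w) ∈ G.E := hE _ (by simp)
        have he' : (u, w') ∈ G.E := hE' _ (by simp)
        have huV : u ∈ G.V := (G.edge_mem _ he).1
        have hww : w = w' := by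
          have := rank_injOn G u huV (by simp [he]) (by simp [he']) hr
          simpa using this
        subst hww
        have htail : (w :: rest) <+: (w :: rest') :=
          path_prefix G (w :: rest) (w :: rest') (by simp) rfl
            (fun e he => hE e (by
              simp only [List.zip_cons_cons, List.tail_cons, List.mem_cons]
              exact Or.inr (by simpa using he)))
            (fun e he => hE' e (by
              simp only [List.zip_cons_cons, List.tail_cons, List.mem_cons]
              exact Or.inr (by simpa using he))) hpre
        exact (List.cons_prefix_cons).2 ⟨rfl, htail⟩

lemma getLast_head_mem_zip : ∀ (p : List ℕ) (c x : ℕ) (r : List ℕ),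
    p.getLast? = some c → (c, x) ∈ (p ++ x :: r).zip (p ++ x :: r).tail
  | [], _, _, _, h => by simp at h
  | [a], c, x, r, h => by
    simp at h; subst h; simp
  | a :: b :: p, c, x, r, h => by
    have : (b :: p).getLast? = some c := by rwa [List.getLast?_cons_cons] at h
    have ih := getLast_head_mem_zip (b :: p) c x r this
    simp only [List.cons_append] at *
    exact List.mem_cons_of_mem _ ih

lemma not_prefix_of_comparable {s s' : List ℕ} (h : Comparable s s') (hne : s ≠ s') :
    ¬ s <+: s' := by
  intro hpre
  obtain ⟨G, v, hS⟩ := h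
  have hsmem : s ∈ Seqs G v := by rw [hS]; exact Set.mem_insert _ _
  have hs'mem : s' ∈ Seqs G v := by rw [hS]; exact Set.mem_insert_of_mem _ rfl
  obtain ⟨p, hp, hps⟩ := hsmem
  obtain ⟨p', hp', hps'⟩ := hs'mem
  obtain ⟨hl, hh, _, hE, c, hc, hlast⟩ := hp
  obtain ⟨hl', hh', _, hE', c', hc', hlast'⟩ := hp'
  have hppre : p <+: p' := by
    apply path_prefix G p p' (by intro h; subst h; simp at hl) (hh.trans hh'.symm) hE hE'
    rw [hps, hps']; exact hpre
  -- p is a proper prefix: lengths differ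
  have hlen : p.length < p'.length := by
    have h1 := seqOf_length G p
    have h2 := seqOf_length G p'
    rw [hps] at h1; rw [hps'] at h2
    have hsl : s.length < s'.length := by
      rcases lt_or_eq_of_le hpre.length_le with h | h
      · exact h
      · exact absurd (List.IsPrefix.eq_of_length hpre h) hne
    omega
  obtain ⟨r, hr⟩ := hppre
  cases r with
  | nil =>
    rw [List.append_nil] at hr
    subst hr
    omega
  | cons x r =>
    have hmem := getLast_head_mem_zip p c x r hlast
    rw [hr] at hmem
    exact G.C_no_out _ (hE' _ hmem) hc

/-! ### construction -/

def encV (q : List ℕ) : ℕ := 2 * Encodable.encode q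
def encD (q : List ℕ) : ℕ := 2 * Encodable.encode q + 1

lemma encV_inj : Function.Injective encV := fun a b h =>
  Encodable.encode_injective (by unfold encV at h; omega)

def preSet (s s' : List ℕ) : Finset (List ℕ) := s.inits.toFinset ∪ s'.inits.toFinset

lemma mem_preSet {s s' q : List ℕ} : q ∈ preSet s s' ↔ q <+: s ∨ q <+: s' := by
  simp [preSet, List.mem_inits]

def realR (s s' q : List ℕ) : Finset ℕ :=
  ({s.getD q.length 0, s'.getD q.length 0} : Finset ℕ).filter (fun x => q ++ [x] ∈ preSet s s')

lemma mem_realR {s s' q : List ℕ} {y : ℕ} (h : q ++ [y] ∈ preSet s s') :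
    y ∈ realR s s' q := by
  rw [realR, Finset.mem_filter]
  refine ⟨?_, h⟩
  have key : ∀ t : List ℕ, q ++ [y] <+: t → t.getD q.length 0 = y := by
    intro t hpt
    have hlt : q.length < t.length := by
      have := hpt.length_le; simp at this; omega
    rw [List.getD_eq_getElem t 0 hlt]
    rw [← hpt.getElem (by simp)]
    exact List.getElem_concat_length (l := q) (a := y) (i := q.length) rfl (by simp)
  refine Finset.mem_insert.2 ?_
  rcases mem_preSet.1 h with hp | hp
  · exact Or.inl (key s hp).symm
  · exact Or.inr (Finset.mem_singleton.2 (key s' hp).symm)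

def mq (s s' q : List ℕ) : ℕ := (realR s s' q).sup id

def target (s s' q : List ℕ) (y : ℕ) : ℕ :=
  if q ++ [y] ∈ preSet s s' then encV (q ++ [y]) else encD (q ++ [y])

def edges (s s' : List ℕ) : Finset (ℕ × ℕ) :=
  (preSet s s').biUnion
    (fun q => (Finset.Icc 1 (mq s s' q)).image (fun y => (encV q, target s s' q y)))

def rankF (e : ℕ × ℕ) : ℕ :=
  (((Encodable.decode (e.2 / 2)) : Option (List ℕ)).getD []).getLastD 1

lemma target_div2 (s s' q : List ℕ) (y : ℕ) :
    (Encodable.decode (target s s' q y / 2) : Option (List ℕ)) = some (q ++ [y]) := by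
  unfold target encV encD
  split <;> 
    [rw [Nat.mul_div_cancel_left _ (by norm_num : 0 < 2)];
     rw [(by omega : (2 * Encodable.encode (q ++ [y]) + 1) / 2 = Encodable.encode (q ++ [y]))]] <;>
  exact Encodable.encodek _

lemma rankF_target (s s' q : List ℕ) (y : ℕ) (u : ℕ) :
    rankF (u, target s s' q y) = y := by
  unfold rankF
  rw [target_div2]
  simp [List.getLastD_concat]

lemma rankF_encV (q : List ℕ) (u : ℕ) : rankF (u, encV q) = q.getLastD 1 := by
  unfold rankF encV
  rw [Nat.mul_div_cancel_left _ (by norm_num : 0 < 2), Encodable.encodek]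
  rfl

lemma target_inj (s s' q : List ℕ) : ∀ y1 y2, target s s' q y1 = target s s' q y2 → y1 = y2 := by
  intro y1 y2 h
  have h1 := target_div2 s s' q y1
  rw [h, target_div2] at h1
  simp only [Option.some.injEq] at h1
  have := List.append_inj_right h1.symm rfl
  simpa using this

-- decompose edges
lemma mem_edges {s s' : List ℕ} {e : ℕ × ℕ} :
    e ∈ edges s s' ↔ ∃ q ∈ preSet s s', ∃ y ∈ Finset.Icc 1 (mq s s' q),
      e = (encV q, target s s' q y) := by
  simp [edges, eq_comm]

lemma mem_edges_real {s s' q : List ℕ} {y : ℕ} (hq : q ∈ preSet s s')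
    (hy : q ++ [y] ∈ preSet s s') (hpos : 1 ≤ y) :
    (encV q, encV (q ++ [y])) ∈ edges s s' := by
  rw [mem_edges]
  refine ⟨q, hq, y, ?_, by rw [target, if_pos hy]⟩
  rw [Finset.mem_Icc]
  exact ⟨hpos, Finset.le_sup (f := id) (mem_realR hy)⟩

lemma pos_of_mem_realR (s s' : List ℕ) (hs : PosSeq s) (hs' : PosSeq s')
    {q : List ℕ} {y : ℕ} (hy : y ∈ realR s s' q) : 1 ≤ y := by
  rw [realR, Finset.mem_filter] at hy
  rcases mem_preSet.1 hy.2 with hp | hp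
  · exact hs y (hp.subset (by simp))
  · exact hs' y (hp.subset (by simp))

lemma realR_full_left (s s' : List ℕ) (hns : ¬ s <+: s') : realR s s' s = ∅ := by
  rw [Finset.eq_empty_iff_forall_notMem]
  intro y hy
  rw [realR, Finset.mem_filter, mem_preSet] at hy
  rcases hy.2 with hp | hp
  · have := hp.length_le; simp at this
  · exact hns ((List.prefix_append s [y]).trans hp)

lemma realR_full_right (s s' : List ℕ) (hns' : ¬ s' <+: s) : realR s s' s' = ∅ := by
  rw [Finset.eq_empty_iff_forall_notMem]
  intro y hy
  rw [realR, Finset.mem_filter, mem_preSet] at hy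
  rcases hy.2 with hp | hp
  · exact hns' ((List.prefix_append s' [y]).trans hp)
  · have := hp.length_le; simp at this

def buildG (s s' : List ℕ) (hns : ¬ s <+: s') (hns' : ¬ s' <+: s) : Instance where
  V := (preSet s s').image encV ∪ (edges s s').image Prod.snd
  E := edges s s'
  C := {encV s, encV s'}
  C_sub := by
    intro c hc
    simp only [Finset.mem_insert, Finset.mem_singleton] at hc
    apply Finset.mem_union_left
    rcases hc with h | h <;> subst h <;>
      exact Finset.mem_image_of_mem _ (mem_preSet.2 (by simp))
  edge_mem := by
    intro e he
    obtain ⟨q, hq, y, hy, hee⟩ := mem_edges.1 he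
    constructor
    · apply Finset.mem_union_left
      rw [hee]
      exact Finset.mem_image_of_mem _ hq
    · exact Finset.mem_union_right _ (Finset.mem_image_of_mem _ he)
  C_no_out := by
    intro e he hc
    obtain ⟨q, hq, y, hy, hee⟩ := mem_edges.1 he
    rw [hee] at hc
    simp only [Finset.mem_insert, Finset.mem_singleton] at hc
    have hq0 : realR s s' q = ∅ := by
      rcases hc with h | h
      · rw [encV_inj h]; exact realR_full_left s s' hns
      · rw [encV_inj h]; exact realR_full_right s s' hns'
    rw [Finset.mem_Icc] at hy
    rw [mq, hq0] at hy
    simp at hy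
    omega
  rank := rankF
  rank_prop := by
    intro u hu
    -- characterize the filter
    by_cases hcase : ∃ q ∈ preSet s s', u = encV q
    · obtain ⟨q, hq, rfl⟩ := hcase
      have hfe : (edges s s').filter (fun e => e.1 = encV q) =
          (Finset.Icc 1 (mq s s' q)).image (fun y => (encV q, target s s' q y)) := by
        ext e
        rw [Finset.mem_filter, mem_edges, Finset.mem_image]
        constructor
        · rintro ⟨⟨q0, hq0, y, hy, rfl⟩, hfst⟩
          rw [encV_inj hfst] at hy ⊢
          exact ⟨y, hy, rfl⟩
        · rintro ⟨y, hy, rfl⟩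
          exact ⟨⟨q, hq, y, hy, rfl⟩, rfl⟩
      have hinj : Set.InjOn (fun y => (encV q, target s s' q y))
          (Finset.Icc 1 (mq s s' q) : Set ℕ) := by
        intro a _ b _ hab
        exact target_inj s s' q a b (congrArg Prod.snd hab)
      have hcomp : ((fun e => rankF e) ∘ fun y => (encV q, target s s' q y)) = id := by
        funext y
        exact rankF_target s s' q y _
      rw [hfe, Finset.card_image_of_injOn hinj, Nat.card_Icc, Nat.add_sub_cancel,
        Finset.image_image, hcomp, Finset.image_id]
    · -- u is not encV of a valid prefix; show filter empty
      have hfe : (edges s s').filter (fun e => e.1 = u) = ∅ := by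
        rw [Finset.eq_empty_iff_forall_notMem]
        intro e he
        rw [Finset.mem_filter] at he
        obtain ⟨q, hq, y, hy, rfl⟩ := mem_edges.1 he.1
        exact hcase ⟨q, hq, he.2.symm⟩
      rw [hfe]
      simp

/-! ### realizing paths -/

def pathOf (q l : List ℕ) : List ℕ :=
  match l with
  | [] => [encV q]
  | x :: l' => encV q :: pathOf (q ++ [x]) l'

lemma pathOf_ne_nil (q l : List ℕ) : pathOf q l ≠ [] := by
  cases l <;> simp [pathOf]

lemma pathOf_head (q l : List ℕ) : (pathOf q l).head? = some (encV q) := by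
  cases l <;> simp [pathOf]

lemma pathOf_length (q l : List ℕ) : (pathOf q l).length = l.length + 1 := by
  induction l generalizing q with
  | nil => simp [pathOf]
  | cons x l ih => simp [pathOf, ih]

lemma pathOf_getLast (q l : List ℕ) : (pathOf q l).getLast? = some (encV (q ++ l)) := by
  induction l generalizing q with
  | nil => simp [pathOf]
  | cons x l ih =>
    rw [pathOf]
    rw [List.getLast?_cons, ih]
    simp

lemma pathOf_mem {u : ℕ} {q l : List ℕ} (h : u ∈ pathOf q l) :
    ∃ t, t <+: l ∧ u = encV (q ++ t) := by
  induction l generalizing q with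
  | nil =>
    simp [pathOf] at h
    exact ⟨[], by simp, by simp [h]⟩
  | cons x l ih =>
    rw [pathOf, List.mem_cons] at h
    rcases h with h | h
    · exact ⟨[], by simp, by simp [h]⟩
    · obtain ⟨t, ht, rfl⟩ := ih h
      exact ⟨x :: t, List.cons_prefix_cons.2 ⟨rfl, ht⟩, by simp⟩

lemma pathOf_nodup (q l : List ℕ) : (pathOf q l).Nodup := by
  induction l generalizing q with
  | nil => simp [pathOf]
  | cons x l ih =>
    rw [pathOf]
    refine List.Nodup.cons ?_ (ih _)
    intro hmem
    obtain ⟨t, _, ht⟩ := pathOf_mem hmem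
    have := encV_inj ht
    have : q.length = ((q ++ [x]) ++ t).length := by rw [← this]
    simp at this


lemma pathOf_cons (q : List ℕ) (x : ℕ) (l : List ℕ) :
    ∃ P', pathOf q (x :: l) = encV q :: encV (q ++ [x]) :: P' ∧
      pathOf (q ++ [x]) l = encV (q ++ [x]) :: P' := by
  rw [pathOf]
  cases l <;> exact ⟨_, rfl, rfl⟩

lemma pathOf_edges (s s' : List ℕ) (hs : PosSeq s) (hs' : PosSeq s') :
    ∀ (l q : List ℕ), (∀ t, t <+: l → q ++ t ∈ preSet s s') →
    ∀ e ∈ (pathOf q l).zip (pathOf q l).tail, e ∈ edges s s' := by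
  intro l
  induction l with
  | nil => intro q _ e he; simp [pathOf] at he
  | cons x l ih =>
    intro q hq e he
    obtain ⟨P', hP1, hP2⟩ := pathOf_cons q x l
    rw [hP1] at he
    simp only [List.tail_cons, List.zip_cons_cons, List.mem_cons] at he
    rcases he with rfl | he
    · have hx : q ++ [x] ∈ preSet s s' := hq [x] (List.cons_prefix_cons.2 ⟨rfl, List.nil_prefix⟩)
      refine mem_edges_real (by simpa using hq [] (by simp)) hx ?_
      rcases mem_preSet.1 hx with hp | hp
      · exact hs x (hp.subset (by simp))
      · exact hs' x (hp.subset (by simp))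
    · refine ih (q ++ [x]) (fun t ht => ?_) e ?_
      · have := hq (x :: t) (List.cons_prefix_cons.2 ⟨rfl, ht⟩)
        simpa [List.append_assoc] using this
      · rw [hP2]
        simpa using he

lemma pathOf_seq : ∀ (l q : List ℕ),
    List.map rankF ((pathOf q l).zip (pathOf q l).tail) = l := by
  intro l
  induction l with
  | nil => intro q; simp [pathOf]
  | cons x l ih =>
    intro q
    obtain ⟨P', hP1, hP2⟩ := pathOf_cons q x l
    rw [hP1]
    simp only [List.tail_cons, List.zip_cons_cons, List.map_cons]
    have h1 : rankF (encV q, encV (q ++ [x])) = x := by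
      rw [rankF_encV, List.getLastD_concat]
    have h2 := ih (q ++ [x])
    rw [hP2] at h2
    simp only [List.tail_cons] at h2
    rw [h1, h2]

lemma forced (s s' : List ℕ) : ∀ (p q : List ℕ), p.head? = some (encV q) →
    (∀ e ∈ p.zip p.tail, e ∈ edges s s') →
    (∃ c ∈ ({encV s, encV s'} : Finset ℕ), p.getLast? = some c) →
    p.getLast? = some (encV (q ++ List.map rankF (p.zip p.tail)))
  | [], q, hh, _, _ => by simp at hh
  | [u], q, hh, _, _ => by
    simp only [List.head?, Option.some.injEq] at hh
    simp [hh]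
  | u :: u2 :: rest, q, hh, hE, hc => by
    simp only [List.head?, Option.some.injEq] at hh
    subst hh
    have he12 : (encV q, u2) ∈ edges s s' := hE _ (by simp)
    obtain ⟨q0, hq0, y, hy, heq⟩ := mem_edges.1 he12
    have hq0q : q = q0 := encV_inj (congrArg Prod.fst heq)
    subst hq0q
    have hu2 : u2 = target s s' q y := (congrArg Prod.snd heq)
    by_cases htar : q ++ [y] ∈ preSet s s'
    · -- real edge
      rw [target, if_pos htar] at hu2
      subst hu2
      have hrec := forced s s' (encV (q ++ [y]) :: rest) (q ++ [y]) rfl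
        (fun e he => hE e (by
          simp only [List.zip_cons_cons, List.tail_cons, List.mem_cons]
          exact Or.inr (by simpa using he)))
        (by
          obtain ⟨c, hcm, hcl⟩ := hc
          exact ⟨c, hcm, by rwa [List.getLast?_cons_cons] at hcl⟩)
      rw [List.getLast?_cons_cons, hrec]
      congr 2
      simp only [List.zip_cons_cons, List.tail_cons, List.map_cons]
      have h1 : rankF (encV q, encV (q ++ [y])) = y := by
        rw [rankF_encV, List.getLastD_concat]
      rw [h1, List.append_assoc]
      rfl
    · -- dummy edge: contradiction
      exfalso
      rw [target, if_neg htar] at hu2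
      subst hu2
      cases rest with
      | nil =>
        obtain ⟨c, hcm, hcl⟩ := hc
        simp only [List.getLast?_cons_cons, List.getLast?_singleton, Option.some.injEq] at hcl
        subst hcl
        simp only [Finset.mem_insert, Finset.mem_singleton] at hcm
        rcases hcm with h | h <;> (unfold encD encV at h; omega)
      | cons u3 r =>
        have he23 : (encD (q ++ [y]), u3) ∈ edges s s' := hE _ (by simp)
        obtain ⟨q1, _, y1, _, heq1⟩ := mem_edges.1 he23
        have := congrArg Prod.fst heq1
        unfold encD encV at this
        simp at this
        omega
termination_by p => p.length
decreasing_by simp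

lemma seqOf_buildG (s s' : List ℕ) (hns : ¬ s <+: s') (hns' : ¬ s' <+: s) (p : List ℕ) :
    seqOf (buildG s s' hns hns') p = List.map rankF (p.zip p.tail) := rfl

lemma seqs_buildG (s s' : List ℕ) (hs : PosSeq s) (hs' : PosSeq s')
    (hs0 : s ≠ []) (hs'0 : s' ≠ []) (hns : ¬ s <+: s') (hns' : ¬ s' <+: s) :
    Seqs (buildG s s' hns hns') (encV []) = {s, s'} := by
  ext t
  simp only [Seqs, Set.mem_setOf_eq, Set.mem_insert_iff, Set.mem_singleton_iff]
  constructor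
  · rintro ⟨p, ⟨hl, hh, hnd, hE, hc⟩, rfl⟩
    have hfor := forced s s' p [] hh hE hc
    obtain ⟨c, hcmem, hclast⟩ := hc
    rw [hfor] at hclast
    simp only [Option.some.injEq] at hclast
    rw [seqOf_buildG]
    have hcmem' : c ∈ ({encV s, encV s'} : Finset ℕ) := hcmem
    simp only [Finset.mem_insert, Finset.mem_singleton] at hcmem'
    subst hclast
    rcases hcmem' with h | h
    · left; have := encV_inj h; simpa using this
    · right; have := encV_inj h; simpa using this
  · have key : ∀ c : List ℕ, PosSeq c → c ≠ [] → c <+: s ∨ c <+: s' →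
        (c = s ∨ c = s') →
        ∃ p, IsDelegPath (buildG s s' hns hns') (encV []) p ∧
          seqOf (buildG s s' hns hns') p = c := by
      intro c hcpos hc0 hcpre hcs
      refine ⟨pathOf [] c, ⟨?_, ?_, pathOf_nodup _ _, ?_, ?_⟩, ?_⟩
      · rw [pathOf_length]
        have : 0 < c.length := List.length_pos_iff.2 hc0
        omega
      · exact pathOf_head _ _
      · exact pathOf_edges s s' hs hs' c [] (fun u hu => by
          simp only [List.nil_append]
          rcases hcpre with h | h
          · exact mem_preSet.2 (Or.inl (hu.trans h))
          · exact mem_preSet.2 (Or.inr (hu.trans h)))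
      · refine ⟨encV c, ?_, pathOf_getLast [] c⟩
        show encV c ∈ ({encV s, encV s'} : Finset ℕ)
        simp only [Finset.mem_insert, Finset.mem_singleton]
        rcases hcs with rfl | rfl
        · exact Or.inl rfl
        · exact Or.inr rfl
      · rw [seqOf_buildG]
        exact pathOf_seq c []
    rintro (rfl | rfl)
    · exact key t hs hs0 (Or.inl List.prefix_rfl) (Or.inl rfl)
    · exact key t hs' hs'0 (Or.inr List.prefix_rfl) (Or.inr rfl)

lemma comparable_symm {s s' : List ℕ} (h : Comparable s s') : Comparable s' s := by
  obtain ⟨G, v, hS⟩ := h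
  exact ⟨G, v, by rw [hS]; exact Set.pair_comm s s'⟩


/-- two distinct non-empty sequences in `𝒮` are comparable iff
neither is a prefix of the other. -/
theorem comparable_iff_not_prefix (s s' : List ℕ)
    (hs : PosSeq s) (hs' : PosSeq s') (hs0 : s ≠ []) (hs'0 : s' ≠ [])
    (hne : s ≠ s') :
    Comparable s s' ↔ (¬ s <+: s' ∧ ¬ s' <+: s) := by
  constructor
  · intro h
    exact ⟨not_prefix_of_comparable h hne,
      not_prefix_of_comparable (comparable_symm h) (Ne.symm hne)⟩
  · rintro ⟨hns, hns'⟩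
    exact ⟨buildG s s' hns hns', encV [],
      seqs_buildG s s' hs hs' hs0 hs'0 hns hns'⟩


end RankedDelegation
end

section
/- Breadth-first delegation (BFD) is confluent. -/
/-!
Formalization of the ranked-delegation (liquid democracy) setting of
"Liquid Democracy with Ranked Delegations".

Vertices are natural numbers.  An instance carries the vertex set `V`,
the edge set `E`, the distinguished set `C` of casting voters (which have
no outgoing edges), and a rank function such that for every vertex the
ranks of its outgoing edges are exactly `{1, ..., outdeg}`.
-/

namespace RankedDelegation

section BFDAux

open List

private theorem lex_total' : ∀ (s t : List ℕ), s ≠ t →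
    List.Lex (· < ·) s t ∨ List.Lex (· < ·) t s
  | [], [], h => absurd rfl h
  | [], _ :: _, _ => Or.inl List.Lex.nil
  | _ :: _, [], _ => Or.inr List.Lex.nil
  | a :: s, b :: t, h => by
    rcases lt_trichotomy a b with hab | rfl | hab
    · exact Or.inl (List.Lex.rel hab)
    · rcases lex_total' s t (by simpa using h) with h' | h'
      · exact Or.inl (List.Lex.cons h')
      · exact Or.inr (List.Lex.cons h')
    · exact Or.inr (List.Lex.rel hab)

private theorem bfd_asymm {s t : List ℕ} (h : bfdRel s t) (h' : bfdRel t s) : False := by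
  rcases h with h | ⟨hl, hx⟩ <;> rcases h' with h' | ⟨hl', hx'⟩
  · omega
  · omega
  · omega
  · exact Std.Asymm.asymm (r := List.Lex (· < ·)) s t hx hx'

private theorem bfd_total {s t : List ℕ} (h : s ≠ t) : bfdRel s t ∨ bfdRel t s := by
  rcases Nat.lt_trichotomy s.length t.length with hl | hl | hl
  · exact Or.inl (Or.inl hl)
  · rcases lex_total' s t h with h' | h'
    · exact Or.inl (Or.inr ⟨hl, h'⟩)
    · exact Or.inr (Or.inr ⟨hl.symm, h'⟩)
  · exact Or.inr (Or.inl hl)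

private theorem bfd_append_left {s t : List ℕ} (c : List ℕ) (h : bfdRel s t) :
    bfdRel (c ++ s) (c ++ t) := by
  rcases h with h | ⟨hl, hx⟩
  · exact Or.inl (by simp; omega)
  · exact Or.inr ⟨by simp [hl], List.Lex.append_left _ hx c⟩

private theorem max_unique {S : Set (List ℕ)} {s t : List ℕ}
    (h : IsMaxOf bfdRel S s) (h' : IsMaxOf bfdRel S t) : s = t := by
  by_contra hne
  exact bfd_asymm (h.2 t h'.1 (Ne.symm hne)) (h'.2 s h.1 hne)

private theorem edg_cons (a : ℕ) (l : List ℕ) :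
    (a :: l).zip (a :: l).tail =
      (l.head?.map (fun b => (a, b))).toList ++ l.zip l.tail := by
  cases l <;> simp

private theorem edg_append_cons (s : List ℕ) (z : ℕ) (t : List ℕ) :
    (s ++ z :: t).zip (s ++ z :: t).tail =
      (s ++ [z]).zip (s ++ [z]).tail ++ (z :: t).zip (z :: t).tail := by
  induction s with
  | nil => simp
  | cons a s ih =>
    have hh : (s ++ z :: t).head? = (s ++ [z]).head? := by cases s <;> simp
    rw [List.cons_append, edg_cons, List.cons_append, edg_cons (l := s ++ [z]), ih,
      List.append_assoc, hh]

private theorem seqOf_append_cons (G : Instance) (s : List ℕ) (z : ℕ) (t : List ℕ) :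
    seqOf G (s ++ z :: t) = seqOf G (s ++ [z]) ++ seqOf G (z :: t) := by
  unfold seqOf
  rw [edg_append_cons, List.map_append]

private theorem length_seqOf (G : Instance) (l : List ℕ) :
    (seqOf G l).length = l.length - 1 := by
  unfold seqOf
  rw [List.length_map, List.length_zip, List.length_tail]
  omega

private theorem mem_edg {v w : ℕ} : ∀ (p : List ℕ), (v, w) ∈ p.zip p.tail →
    ∃ s t, p = s ++ v :: w :: t
  | [], h => by simp at h
  | [a], h => by simp at h
  | a :: b :: l, h => by
    have h' : (v, w) = (a, b) ∨ (v, w) ∈ (b :: l).zip (b :: l).tail := by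
      simpa using h
    rcases h' with h' | h'
    · obtain ⟨rfl, rfl⟩ := Prod.mk.injEq .. ▸ h'
      exact ⟨[], l, rfl⟩
    · obtain ⟨s, t, hst⟩ := mem_edg (b :: l) h'
      exact ⟨a :: s, t, by rw [hst]; rfl⟩

private theorem nodup_decomp {v : ℕ} : ∀ (s₁ s₂ t₁ t₂ : List ℕ),
    (s₁ ++ v :: t₁).Nodup → s₁ ++ v :: t₁ = s₂ ++ v :: t₂ → s₁ = s₂ ∧ t₁ = t₂
  | [], [], t₁, t₂, _, h => by simp_all
  | [], a :: s₂, t₁, t₂, hn, h => by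
    simp only [List.nil_append, List.cons_append, List.cons.injEq] at h
    obtain ⟨rfl, rfl⟩ := h
    simp at hn
  | a :: s₁, [], t₁, t₂, hn, h => by
    simp only [List.nil_append, List.cons_append, List.cons.injEq] at h
    obtain ⟨rfl, rfl⟩ := h
    simp at hn
  | a :: s₁, b :: s₂, t₁, t₂, hn, h => by
    simp only [List.cons_append, List.cons.injEq] at h
    obtain ⟨rfl, h2⟩ := h
    obtain ⟨rfl, rfl⟩ := nodup_decomp s₁ s₂ t₁ t₂ (by simpa using hn.of_cons) h2
    exact ⟨rfl, rfl⟩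

private theorem head?_append_cons (p₁ : List ℕ) (z : ℕ) (p₂ p₂' : List ℕ) :
    (p₁ ++ z :: p₂).head? = (p₁ ++ z :: p₂').head? := by cases p₁ <;> simp

private theorem getLast?_append_cons (p₁ : List ℕ) (z : ℕ) (p₂ : List ℕ) :
    (p₁ ++ z :: p₂).getLast? = (z :: p₂).getLast? := by
  rw [List.getLast?_append, List.getLast?_eq_getLast (List.cons_ne_nil z p₂)]
  simp

private theorem deleg_suffix {G : Instance} {u : ℕ} {p₁ : List ℕ} {z : ℕ} {p₂ : List ℕ}
    (h : IsDelegPath G u (p₁ ++ z :: p₂)) (hne : p₂ ≠ []) :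
    IsDelegPath G z (z :: p₂) := by
  obtain ⟨hlen, hhead, hnd, hE, c, hc, hlast⟩ := h
  refine ⟨?_, rfl, ?_, ?_, c, hc, ?_⟩
  · rcases p₂ with _ | ⟨a, t⟩
    · exact absurd rfl hne
    · simp
  · exact hnd.sublist (List.sublist_append_right p₁ (z :: p₂))
  · intro e he
    refine hE e ?_
    rw [edg_append_cons]
    exact List.mem_append_right _ he
  · rw [← hlast, getLast?_append_cons]

private theorem deleg_cons {G : Instance} {u : ℕ} {p : List ℕ} (h : IsDelegPath G u p) :
    ∃ x l, p = u :: x :: l ∧ (u, x) ∈ G.E := by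
  obtain ⟨hlen, hhead, _, hE, _⟩ := h
  rcases p with _ | ⟨a, _ | ⟨b, l⟩⟩
  · simp at hlen
  · simp at hlen
  · have ha : a = u := by simpa using hhead
    subst ha
    exact ⟨b, l, rfl, hE (a, b) (by simp)⟩

private theorem suffix_opt (f : DelegationRule) (hf : IsSequenceRule f bfdRel)
    (G : Instance) (u : ℕ) (hu : Delegating G u) (p₁ : List ℕ) (v : ℕ) (p₂ : List ℕ)
    (hp : f.path G u = p₁ ++ v :: p₂) (hne : p₂ ≠ []) :
    IsMaxOf bfdRel (Seqs G v) (seqOf G (v :: p₂)) := by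
  have hpath := f.valid G u hu
  rw [hp] at hpath
  have hq : IsDelegPath G v (v :: p₂) := deleg_suffix hpath hne
  refine ⟨⟨v :: p₂, hq, rfl⟩, ?_⟩
  intro t ht htne
  by_contra hcon
  have hbt : bfdRel t (seqOf G (v :: p₂)) := (bfd_total htne).resolve_right hcon
  obtain ⟨qs, hqs, rfl⟩ := ht
  obtain ⟨x0, l0, hqs_eq, _⟩ := deleg_cons hqs
  obtain ⟨x1, l1, hpeq, hux⟩ := deleg_cons hpath
  have huC : u ∉ G.C := G.C_no_out (u, x1) hux
  set P := p₁ ++ v :: p₂ with hP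
  set pr : ℕ → Bool := fun x => decide (x ∉ qs) with hpr
  have hvP : v ∈ P := by rw [hP]; simp
  have hvqs : v ∈ qs := by rw [hqs_eq]; simp
  have hdw : P.dropWhile pr ≠ [] := by
    intro h0
    have htw : P.takeWhile pr = P := by
      conv_rhs => rw [← List.takeWhile_append_dropWhile (p := pr) (l := P)]
      rw [h0, List.append_nil]
    have := List.mem_takeWhile_imp (htw ▸ hvP)
    simp [hpr] at this
    exact this hvqs
  set z := (P.dropWhile pr).head hdw with hz
  have hzqs : z ∈ qs := by
    have h0 := List.head_dropWhile_not pr (l := P) hdw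
    rw [← hz] at h0
    simpa [hpr] using h0
  have hsplit : P = P.takeWhile pr ++ z :: (P.dropWhile pr).tail := by
    conv_lhs => rw [← List.takeWhile_append_dropWhile (p := pr) (l := P)]
    rw [hz, List.cons_head_tail]
  set a₁ := P.takeWhile pr with ha₁def
  set a₂ := (P.dropWhile pr).tail with ha₂def
  have ha₁ : ∀ x ∈ a₁, x ∉ qs := by
    intro x hx
    have := List.mem_takeWhile_imp (ha₁def ▸ hx)
    simpa [hpr] using this
  obtain ⟨b₁, b₂, hqsplit⟩ := List.append_of_mem hzqs
  have hPnd : P.Nodup := hpath.2.2.1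
  have hva₂ : v ∈ z :: a₂ := by
    have h0 := hvP
    rw [hsplit] at h0
    rcases List.mem_append.1 h0 with h0 | h0
    · exact absurd hvqs (ha₁ v h0)
    · exact h0
  obtain ⟨m, t', hmt⟩ := List.append_of_mem hva₂
  have heq2 : (a₁ ++ m) ++ v :: t' = p₁ ++ v :: p₂ := by
    rw [List.append_assoc, ← hmt, ← hsplit]
  have hnd2 : ((a₁ ++ m) ++ v :: t').Nodup := by
    rw [heq2, ← hP]
    exact hPnd
  obtain ⟨-, h3⟩ := nodup_decomp _ _ _ _ hnd2 heq2
  rw [h3] at hmt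
  set r := a₁ ++ z :: b₂ with hr
  have hrpath : IsDelegPath G u r := by
    obtain ⟨hlen, hhead, hnd, hE, c, hc, hlast⟩ := hpath
    obtain ⟨hlen', hhead', hnd', hE', c', hc', hlast'⟩ := hqs
    have hsubnd : (z :: b₂).Nodup := hnd'.sublist
      (by rw [hqsplit]; exact List.sublist_append_right _ _)
    refine ⟨?_, ?_, ?_, ?_, ?_⟩
    · by_cases ha : a₁ = []
      · by_cases hb : b₂ = []
        · exfalso
          have hz_u : z = u := by
            have h0 : P.head? = some u := hhead
            rw [hsplit, ha] at h0
            simpa using h0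
          have h1 : qs.getLast? = some z := by
            rw [hqsplit, hb]
            exact List.getLast?_concat
          rw [hlast'] at h1
          have : z = c' := by simpa using h1.symm
          exact huC (hz_u ▸ this ▸ hc')
        · have h1 : 1 ≤ b₂.length := List.length_pos_iff.2 hb
          rw [hr]
          simp
          omega
      · have h1 : 1 ≤ a₁.length := List.length_pos_iff.2 ha
        rw [hr]
        simp
        omega
    · rw [hr, head?_append_cons a₁ z b₂ a₂, ← hsplit]
      exact hhead
    · rw [hr, List.nodup_append]
      refine ⟨hPnd.sublist (by rw [hsplit]; exact List.sublist_append_left _ _),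
        hsubnd, ?_⟩
      intro x hx1 y hx2 hxy
      subst hxy
      exact ha₁ x hx1 (hqsplit ▸ List.mem_append_right b₁ hx2)
    · intro e he
      rw [hr, edg_append_cons] at he
      rcases List.mem_append.1 he with he | he
      · refine hE e ?_
        rw [hsplit, edg_append_cons]
        exact List.mem_append_left _ he
      · refine hE' e ?_
        rw [hqsplit, edg_append_cons]
        exact List.mem_append_right _ he
    · by_cases hb : b₂ = []
      · subst hb
        have h1 : qs.getLast? = some z := by
          rw [hqsplit]
          exact List.getLast?_concat
        rw [hlast'] at h1
        have hz_c : z = c' := by simpa using h1.symm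
        refine ⟨z, hz_c ▸ hc', ?_⟩
        rw [hr, getLast?_append_cons]
        rfl
      · refine ⟨c', hc', ?_⟩
        rw [hr, getLast?_append_cons, ← hlast', hqsplit, getLast?_append_cons]
  have key : bfdRel (seqOf G (z :: b₂)) (seqOf G (z :: a₂)) := by
    by_cases hb1 : b₁ = []
    · have hqs2 : qs = z :: b₂ := by rw [hqsplit, hb1, List.nil_append]
      have hz_v : z = v := by
        have h0 := hqs2
        rw [hqs_eq] at h0
        exact (List.cons.injEq .. ▸ h0).1.symm
      have hnd3 : (z :: a₂).Nodup :=
        hPnd.sublist (by rw [hsplit]; exact List.sublist_append_right _ _)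
      rw [hz_v] at hnd3 hmt
      obtain ⟨-, ha2p2⟩ := nodup_decomp [] m a₂ p₂ (by simpa using hnd3) (by simpa using hmt)
      rw [ha2p2, ← hqs2, hz_v]
      exact hbt
    · left
      rw [length_seqOf, length_seqOf]
      have l1 : qs.length = b₁.length + 1 + b₂.length := by
        rw [hqsplit]; simp only [List.length_append, List.length_cons]; omega
      have l2 : (z :: a₂).length = m.length + 1 + p₂.length := by
        rw [hmt]; simp only [List.length_append, List.length_cons]; omega
      have l3 : 1 ≤ b₁.length := List.length_pos_iff.2 hb1
      have l4 : (seqOf G qs).length ≤ (seqOf G (v :: p₂)).length := by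
        rcases hbt with h | ⟨h, -⟩
        · exact le_of_lt h
        · exact le_of_eq h
      rw [length_seqOf, length_seqOf] at l4
      simp only [List.length_cons] at l2 ⊢
      simp at l4
      omega
  have hbfd : bfdRel (seqOf G r) (seqOf G P) := by
    rw [hr, hsplit, seqOf_append_cons G a₁ z b₂, seqOf_append_cons G a₁ z a₂]
    exact bfd_append_left _ key
  have hmax := hf.2 G u hu
  rw [hp] at hmax
  have hrS : seqOf G r ∈ Seqs G u := ⟨r, hrpath, rfl⟩
  by_cases hre : seqOf G r = seqOf G P
  · exact bfd_asymm (hre ▸ hbfd) (hre ▸ hbfd)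
  · exact bfd_asymm hbfd (hmax.2 _ hrS hre)

end BFDAux

/-- breadth-first delegation is confluent. -/
theorem bfd_confluent (f : DelegationRule) (hf : IsSequenceRule f bfdRel) :
    Confluent f := by
  intro G v hv
  obtain ⟨w, rest, hpv, hwE⟩ := deleg_cons (f.valid G v hv)
  refine ⟨w, ⟨v, hv, by simp [hpv]⟩, ?_⟩
  intro y ⟨u, hu, hy⟩
  obtain ⟨s', t'', hdecomp⟩ := mem_edg _ hy
  have h1 : IsMaxOf bfdRel (Seqs G v) (seqOf G (v :: y :: t'')) :=
    suffix_opt f hf G u hu s' v (y :: t'') hdecomp (by simp)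
  have h2 : IsMaxOf bfdRel (Seqs G v) (seqOf G (v :: w :: rest)) :=
    suffix_opt f hf G v hv [] v (w :: rest) (by simpa using hpv) (by simp)
  have heq := max_unique h1 h2
  have hr1 : G.rank (v, y) = G.rank (v, w) := by
    have e1 : seqOf G (v :: y :: t'') = G.rank (v, y) :: seqOf G (y :: t'') := rfl
    have e2 : seqOf G (v :: w :: rest) = G.rank (v, w) :: seqOf G (w :: rest) := rfl
    rw [e1, e2] at heq
    exact (List.cons.injEq .. ▸ heq).1
  have hyE : (v, y) ∈ G.E := (f.valid G u hu).2.2.2.1 _ hy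
  have hvV : v ∈ G.V := (G.edge_mem _ hwE).1
  have hinj : Set.InjOn G.rank ↑(G.E.filter (fun e => e.1 = v)) := by
    rw [← Finset.card_image_iff, G.rank_prop v hvV, Nat.card_Icc]
    omega
  have := hinj (by simp [hyE]) (by simp [hwE]) hr1
  exact (Prod.mk.injEq .. ▸ this).2

end RankedDelegation
end

section
/- MinSum is confluent. -/
/-!
Formalization of the ranked-delegation (liquid democracy) setting of
"Liquid Democracy with Ranked Delegations".

Vertices are natural numbers.  An instance carries the vertex set `V`,
the edge set `E`, the distinguished set `C` of casting voters (which have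
no outgoing edges), and a rank function such that for every vertex the
ranks of its outgoing edges are exactly `{1, ..., outdeg}`.
-/

namespace RankedDelegation

lemma zip_tail_cons_cons (a b : ℕ) (t : List ℕ) :
    (a :: b :: t).zip (a :: b :: t).tail = (a, b) :: ((b :: t).zip (b :: t).tail) := rfl

lemma edges_append : ∀ (l : List ℕ) (x : ℕ) (m : List ℕ),
    (l ++ x :: m).zip (l ++ x :: m).tail
      = ((l ++ [x]).zip (l ++ [x]).tail) ++ ((x :: m).zip (x :: m).tail)
  | [], x, m => by simp
  | [a], x, m => by simp [zip_tail_cons_cons]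
  | a :: b :: l, x, m => by
    have ih := edges_append (b :: l) x m
    simp only [List.cons_append, zip_tail_cons_cons] at *
    rw [ih]

lemma head?_append_cons_s3 (l : List ℕ) (x : ℕ) (A B : List ℕ) :
    (l ++ x :: A).head? = (l ++ x :: B).head? := by cases l <;> simp

lemma split_first : ∀ (r q : List ℕ), (∃ a ∈ r, a ∈ q) →
    ∃ r₁ x r₂, r = r₁ ++ x :: r₂ ∧ x ∈ q ∧ ∀ a ∈ r₁, a ∉ q := by
  intro r
  induction r with
  | nil => rintro q ⟨a, h, -⟩; cases h
  | cons a r ih =>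
    intro q h
    by_cases ha : a ∈ q
    · exact ⟨[], a, r, rfl, ha, by simp⟩
    · obtain ⟨b, hb, hbq⟩ := h
      have hb' : b ∈ r := by
        rcases List.mem_cons.1 hb with rfl | h
        · exact absurd hbq ha
        · exact h
      obtain ⟨r₁, x, r₂, hr, hx, hall⟩ := ih q ⟨b, hb', hbq⟩
      refine ⟨a :: r₁, x, r₂, by rw [List.cons_append, hr], hx, ?_⟩
      intro c hc
      rcases List.mem_cons.1 hc with rfl | h
      · exact ha
      · exact hall c h

lemma one_le_sum (l : List ℕ) (h : l ≠ []) (h1 : ∀ a ∈ l, 1 ≤ a) : 1 ≤ l.sum := by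
  cases l with
  | nil => exact absurd rfl h
  | cons a t =>
    have := h1 a List.mem_cons_self
    simp only [List.sum_cons]
    omega

lemma mem_edges_split : ∀ (p : List ℕ) (a b : ℕ), (a, b) ∈ p.zip p.tail →
    ∃ l m, p = l ++ a :: b :: m := by
  intro p
  induction p with
  | nil => simp
  | cons c p ih =>
    intro a b h
    cases p with
    | nil => simp at h
    | cons d t =>
      rw [zip_tail_cons_cons] at h
      rcases List.mem_cons.1 h with h | h
      · obtain ⟨rfl, rfl⟩ : a = c ∧ b = d := by
          constructor <;> [exact congrArg Prod.fst h; exact congrArg Prod.snd h]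
        exact ⟨[], t, rfl⟩
      · obtain ⟨l, m, hm⟩ := ih a b h
        exact ⟨c :: l, m, by rw [List.cons_append, ← hm]⟩


lemma lexRel_asymm {s t : List ℕ} (h : lexRel s t) (h' : lexRel t s) : False :=
  (List.Lex.asymm (α := ℕ) (· < ·)).asymm s t h h'

lemma lexRel_total {s t : List ℕ} (h : s ≠ t) : lexRel s t ∨ lexRel t s := by
  rcases trichotomous_of (List.Lex (α := ℕ) (· < ·)) s t with h1 | h1 | h1
  · exact Or.inl h1
  · exact absurd h1 h
  · exact Or.inr h1

lemma minSumRel_asymm {s t : List ℕ} (h : minSumRel s t) (h' : minSumRel t s) : False := by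
  rcases h with h | ⟨he, h⟩ <;> rcases h' with h' | ⟨he', h'⟩
  · omega
  · omega
  · omega
  · exact lexRel_asymm h h'

lemma minSumRel_total {s t : List ℕ} (h : s ≠ t) : minSumRel s t ∨ minSumRel t s := by
  rcases lt_trichotomy s.sum t.sum with h1 | h1 | h1
  · exact Or.inl (Or.inl h1)
  · rcases lexRel_total h with h2 | h2
    · exact Or.inl (Or.inr ⟨h1, h2⟩)
    · exact Or.inr (Or.inr ⟨h1.symm, h2⟩)
  · exact Or.inr (Or.inl h1)

lemma lexRel_append_left (c : List ℕ) {s t : List ℕ} (h : lexRel s t) :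
    lexRel (c ++ s) (c ++ t) := by
  induction c with
  | nil => exact h
  | cons a c ih => exact List.Lex.cons ih

lemma minSumRel_append_left (c : List ℕ) {s t : List ℕ} (h : minSumRel s t) :
    minSumRel (c ++ s) (c ++ t) := by
  rcases h with h | ⟨he, h⟩
  · exact Or.inl (by simp [List.sum_append]; omega)
  · exact Or.inr ⟨by simp [List.sum_append, he], lexRel_append_left c h⟩

lemma isMaxOf_unique {S : Set (List ℕ)} {s s' : List ℕ}
    (h : IsMaxOf minSumRel S s) (h' : IsMaxOf minSumRel S s') : s = s' := by
  by_contra hne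
  exact minSumRel_asymm (h.2 s' h'.1 (Ne.symm hne)) (h'.2 s h.1 hne)

lemma rank_pos (G : Instance) (e : ℕ × ℕ) (he : e ∈ G.E) : 1 ≤ G.rank e := by
  have h1 : e.1 ∈ G.V := (G.edge_mem e he).1
  have h2 : G.rank e ∈ Finset.Icc 1 (G.E.filter (fun e' => e'.1 = e.1)).card := by
    rw [← G.rank_prop e.1 h1]
    exact Finset.mem_image_of_mem _ (Finset.mem_filter.2 ⟨he, rfl⟩)
  exact (Finset.mem_Icc.1 h2).1

lemma rank_inj (G : Instance) (v : ℕ) (hv : v ∈ G.V) (e e' : ℕ × ℕ)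
    (he : e ∈ G.E) (he' : e' ∈ G.E) (h1 : e.1 = v) (h1' : e'.1 = v)
    (hr : G.rank e = G.rank e') : e = e' := by
  set s := G.E.filter (fun e => e.1 = v) with hs
  have hcard : (s.image G.rank).card = s.card := by
    rw [hs, G.rank_prop v hv, Nat.card_Icc]
    omega
  exact (Finset.card_image_iff.1 hcard)
    (by simp only [hs, Finset.coe_filter]; exact ⟨he, h1⟩)
    (by simp only [hs, Finset.coe_filter]; exact ⟨he', h1'⟩) hr

lemma path_shape (G : Instance) (v : ℕ) (p : List ℕ) (hp : IsDelegPath G v p) :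
    ∃ w t, p = v :: w :: t := by
  obtain ⟨h2, hh, -, -, -⟩ := hp
  match p, h2 with
  | a :: b :: t, _ =>
    simp only [List.head?_cons, Option.some.injEq] at hh
    exact ⟨b, t, by rw [hh]⟩

lemma deleg_not_cast (G : Instance) (u : ℕ) (hu : Delegating G u) : u ∉ G.C := by
  obtain ⟨-, p, hp⟩ := hu
  obtain ⟨w, t, rfl⟩ := path_shape G u p hp
  have he : (u, w) ∈ G.E := hp.2.2.2.1 (u, w) (by rw [zip_tail_cons_cons]; exact List.mem_cons_self)
  exact G.C_no_out (u, w) he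

lemma seqOf_append (G : Instance) (l : List ℕ) (x : ℕ) (m : List ℕ) :
    seqOf G (l ++ x :: m) = seqOf G (l ++ [x]) ++ seqOf G (x :: m) := by
  unfold seqOf
  rw [edges_append, List.map_append]

lemma suffix_max (f : DelegationRule) (hf : IsSequenceRule f minSumRel)
    (G : Instance) (u : ℕ) (hu : Delegating G u) (l : List ℕ) (v : ℕ) (m : List ℕ)
    (hm : m ≠ []) (hpeq : f.path G u = l ++ v :: m) :
    IsMaxOf minSumRel (Seqs G v) (seqOf G (v :: m)) := by
  obtain ⟨-, hmax⟩ := hf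
  have hp : IsDelegPath G u (f.path G u) := f.valid G u hu
  rw [hpeq] at hp
  obtain ⟨hp2, hph, hpnd, hpe, c, hcC, hplast⟩ := hp
  -- the suffix `v :: m` is a delegation path from `v`
  have hq : IsDelegPath G v (v :: m) := by
    refine ⟨?_, rfl, List.Nodup.of_append_right hpnd, ?_, c, hcC, ?_⟩
    · cases m with
      | nil => exact absurd rfl hm
      | cons a t => simp
    · intro e he
      exact hpe e (by rw [edges_append]; exact List.mem_append_right _ he)
    · rw [← List.getLast?_append_cons l v m]
      exact hplast
  have hv : Delegating G v := by
    obtain ⟨w, t, hmw⟩ : ∃ w t, m = w :: t := by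
      cases m with
      | nil => exact absurd rfl hm
      | cons a t => exact ⟨a, t, rfl⟩
    have hewv : (v, w) ∈ G.E := by
      apply hq.2.2.2.1
      rw [hmw, zip_tail_cons_cons]
      exact List.mem_cons_self
    exact ⟨(G.edge_mem _ hewv).1, ⟨v :: m, hq⟩⟩
  refine ⟨⟨v :: m, hq, rfl⟩, ?_⟩
  intro t ht htne
  by_contra hcon
  have hrel' := (minSumRel_total htne).resolve_right hcon
  obtain ⟨q', hq'path, hq'seq⟩ := ht
  subst hq'seq
  have hrel : minSumRel (seqOf G q') (seqOf G (v :: m)) := hrel'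
  have hvq' : v ∈ q' := by
    obtain ⟨w', t', h⟩ := path_shape G v q' hq'path
    rw [h]; exact List.mem_cons_self
  obtain ⟨r₁, x, r₂, hr, hxq', hr₁⟩ := split_first (l ++ [v]) q' ⟨v, by simp, hvq'⟩
  obtain ⟨q₁, q₂, hq'eq⟩ := List.append_of_mem hxq'
  have hpx : l ++ v :: m = r₁ ++ x :: (r₂ ++ m) := by
    rw [show l ++ v :: m = (l ++ [v]) ++ m by simp, hr]
    simp
  obtain ⟨hq'2, hq'h, hq'nd, hq'e, c', hc'C, hq'last⟩ := hq'path
  -- properties of the new path p'' = r₁ ++ x :: q₂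
  have hxq₂nd : (x :: q₂).Nodup := by
    have h := hq'nd; rw [hq'eq] at h; exact h.of_append_right
  have hxq₂sub : ∀ a ∈ x :: q₂, a ∈ q' := by
    intro a ha; rw [hq'eq]; exact List.mem_append_right _ ha
  have hxq₂last : (x :: q₂).getLast? = some c' := by
    have h := hq'last
    rw [hq'eq, List.getLast?_append_cons] at h
    exact h
  have hxq₂e : ∀ e ∈ (x :: q₂).zip (x :: q₂).tail, e ∈ G.E := by
    intro e he
    apply hq'e
    rw [hq'eq, edges_append]
    exact List.mem_append_right _ he
  have hpnd' : (r₁ ++ x :: (r₂ ++ m)).Nodup := hpx ▸ hpnd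
  have hr₁nd : r₁.Nodup := hpnd'.of_append_left
  have hp''nd : (r₁ ++ x :: q₂).Nodup :=
    List.Nodup.append hr₁nd hxq₂nd (fun a ha ha' => hr₁ a ha (hxq₂sub a ha'))
  have hp''h : (r₁ ++ x :: q₂).head? = some u := by
    have h : (r₁ ++ x :: (r₂ ++ m)).head? = some u := by rw [← hpx]; exact hph
    rw [head?_append_cons_s3 r₁ x q₂ (r₂ ++ m)]
    exact h
  have hp''e : ∀ e ∈ (r₁ ++ x :: q₂).zip (r₁ ++ x :: q₂).tail, e ∈ G.E := by
    intro e he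
    rw [edges_append] at he
    rcases List.mem_append.1 he with he | he
    · apply hpe e
      rw [hpx, edges_append]
      exact List.mem_append_left _ he
    · exact hxq₂e e he
  have hp''last : (r₁ ++ x :: q₂).getLast? = some c' := by
    rw [List.getLast?_append_cons]
    exact hxq₂last
  have hp''2 : 2 ≤ (r₁ ++ x :: q₂).length := by
    cases r₁ with
    | cons a r' => simp [List.length_append]; omega
    | nil =>
      have hxu : x = u := by simpa using hp''h
      cases q₂ with
      | cons b t => simp
      | nil =>
        have hxc : x = c' := by simpa using hxq₂last
        exact absurd (hxc ▸ hc'C) (hxu ▸ deleg_not_cast G u hu)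
  have hp''path : IsDelegPath G u (r₁ ++ x :: q₂) :=
    ⟨hp''2, hp''h, hp''nd, hp''e, c', hc'C, hp''last⟩
  -- key comparison
  have key : minSumRel (seqOf G (r₁ ++ x :: q₂)) (seqOf G (l ++ v :: m)) ∧
      seqOf G (r₁ ++ x :: q₂) ≠ seqOf G (l ++ v :: m) := by
    by_cases hxv : x = v
    · subst hxv
      -- r₂ = []
      have hrnd : (l ++ [x]).Nodup := by
        have hsub : List.Sublist (l ++ [x]) (l ++ x :: m) :=
          List.Sublist.append_left (List.cons_sublist_cons.2 (List.nil_sublist m)) l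
        exact hsub.nodup hpnd
      have hr₂ : r₂ = [] := by
        cases r₂ with
        | nil => rfl
        | cons b s =>
          exfalso
          have h1 : (l ++ [x]).getLast? = some x := by simp
          rw [hr, List.getLast?_append_cons, List.getLast?_cons_cons] at h1
          have hxm : x ∈ b :: s := List.mem_of_mem_getLast? (by simp [h1])
          have h2 : (x :: b :: s).Nodup := by
            have h := hrnd; rw [hr] at h; exact h.of_append_right
          exact (List.nodup_cons.1 h2).1 hxm
      have hq₁ : q₁ = [] := by
        cases q₁ with
        | nil => rfl
        | cons a s =>
          exfalso
          have hax : a = x := by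
            have h := hq'h
            rw [hq'eq] at h
            simpa using h
          have h := hq'nd
          rw [hq'eq, hax] at h
          rw [List.nodup_append] at h
          exact h.2.2 x List.mem_cons_self x List.mem_cons_self rfl
      subst hr₂; subst hq₁
      rw [List.nil_append] at hq'eq
      rw [hq'eq] at hrel htne
      rw [hpx]
      simp only [List.nil_append]
      rw [seqOf_append G r₁ x q₂, seqOf_append G r₁ x m]
      exact ⟨minSumRel_append_left _ hrel, fun hEq => htne (List.append_cancel_left hEq)⟩
    · -- x ≠ v : the middle part contributes at least 1 to the sum
      have hr₂ne : r₂ ≠ [] := by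
        rintro rfl
        apply hxv
        have h1 : (l ++ [v]).getLast? = some v := by simp
        rw [hr, List.getLast?_append_cons] at h1
        simpa using h1
      obtain ⟨d, a, rfl⟩ : ∃ d a, r₂ = d ++ [a] := by
        rcases List.eq_nil_or_concat r₂ with h | ⟨d, a, h⟩
        · exact absurd h hr₂ne
        · exact ⟨d, a, by simpa using h⟩
      have hav : a = v := by
        have h1 : (l ++ [v]).getLast? = some v := by simp
        rw [hr, List.getLast?_append_cons] at h1
        have h2 : (x :: (d ++ [a])).getLast? = some a := by
          rw [show x :: (d ++ [a]) = (x :: d) ++ a :: [] by simp,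
            List.getLast?_append_cons]
          rfl
        rw [h2] at h1
        exact Option.some_injective _ h1
      rw [hav] at hpx
      -- sums
      have hsplit1 : seqOf G (l ++ v :: m)
          = seqOf G (r₁ ++ [x]) ++ (seqOf G ((x :: d) ++ [v]) ++ seqOf G (v :: m)) := by
        rw [hpx, seqOf_append]
        congr 1
        rw [show x :: ((d ++ [v]) ++ m) = (x :: d) ++ v :: m by simp, seqOf_append]
      have hsplit2 : seqOf G (r₁ ++ x :: q₂)
          = seqOf G (r₁ ++ [x]) ++ seqOf G (x :: q₂) := seqOf_append G r₁ x q₂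
      have hsplit3 : seqOf G q' = seqOf G (q₁ ++ [x]) ++ seqOf G (x :: q₂) := by
        rw [hq'eq, seqOf_append]
      -- middle block has positive sum
      have hmid : 1 ≤ (seqOf G ((x :: d) ++ [v])).sum := by
        apply one_le_sum
        · cases d with
          | nil => simp [seqOf]
          | cons e d' =>
            simp only [List.cons_append, seqOf, zip_tail_cons_cons]
            simp
        · intro b hb
          obtain ⟨e, he, rfl⟩ := List.mem_map.1 hb
          apply rank_pos
          apply hpe e
          rw [hpx, edges_append]
          apply List.mem_append_right
          rw [show x :: ((d ++ [v]) ++ m) = (x :: d) ++ v :: m by simp, edges_append]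
          exact List.mem_append_left _ he
      have hsum1 : (seqOf G (x :: q₂)).sum ≤ (seqOf G q').sum := by
        rw [hsplit3, List.sum_append]; omega
      have hsum2 : (seqOf G q').sum ≤ (seqOf G (v :: m)).sum := by
        rcases hrel with h | ⟨h, -⟩
        · exact le_of_lt h
        · exact le_of_eq h
      have hlt : (seqOf G (r₁ ++ x :: q₂)).sum < (seqOf G (l ++ v :: m)).sum := by
        rw [hsplit1, hsplit2]
        simp only [List.sum_append]
        omega
      exact ⟨Or.inl hlt, fun hEq => by rw [hEq] at hlt; omega⟩
  -- contradiction with maximality at u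
  have hmaxu := hmax G u hu
  rw [hpeq] at hmaxu
  have h1 : seqOf G (r₁ ++ x :: q₂) ∈ Seqs G u := ⟨r₁ ++ x :: q₂, hp''path, rfl⟩
  exact minSumRel_asymm key.1 (hmaxu.2 _ h1 key.2)

theorem minsum_confluent' (f : DelegationRule) (hf : IsSequenceRule f minSumRel) :
    Confluent f := by
  intro G v hv
  have hvpath : IsDelegPath G v (f.path G v) := f.valid G v hv
  obtain ⟨w₀, t₀, hpv⟩ := path_shape G v _ hvpath
  refine ⟨w₀, ⟨v, hv, ?_⟩, ?_⟩
  · rw [hpv, zip_tail_cons_cons]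
    exact List.mem_cons_self
  · rintro w ⟨u, hu, hw⟩
    obtain ⟨l, m', hlm⟩ := mem_edges_split _ v w hw
    have h1 := suffix_max f hf G u hu l v (w :: m') (List.cons_ne_nil _ _) hlm
    have h2 := suffix_max f hf G v hv [] v (w₀ :: t₀) (List.cons_ne_nil _ _)
      (by simpa using hpv)
    have hseq : seqOf G (v :: w :: m') = seqOf G (v :: w₀ :: t₀) := isMaxOf_unique h1 h2
    have hrank : G.rank (v, w) = G.rank (v, w₀) := by
      have h := congrArg List.head? hseq
      simpa [seqOf, zip_tail_cons_cons] using h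
    have hupath : IsDelegPath G u (f.path G u) := f.valid G u hu
    have hew : (v, w) ∈ G.E := hupath.2.2.2.1 _ hw
    have hew₀ : (v, w₀) ∈ G.E := by
      apply hvpath.2.2.2.1
      rw [hpv, zip_tail_cons_cons]
      exact List.mem_cons_self
    have hvV : v ∈ G.V := (G.edge_mem _ hew).1
    have heq := rank_inj G v hvV (v, w) (v, w₀) hew hew₀ rfl rfl hrank
    exact congrArg Prod.snd heq

/-- MinSum is confluent. -/
theorem minsum_confluent (f : DelegationRule) (hf : IsSequenceRule f minSumRel) :
    Confluent f :=
  minsum_confluent' f hf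

end RankedDelegation
end

section
/- Depth-first delegation (DFD) is not confluent. -/
/-!
Formalization of the ranked-delegation (liquid democracy) setting of
"Liquid Democracy with Ranked Delegations".

Vertices are natural numbers.  An instance carries the vertex set `V`,
the edge set `E`, the distinguished set `C` of casting voters (which have
no outgoing edges), and a rank function such that for every vertex the
ranks of its outgoing edges are exactly `{1, ..., outdeg}`.
-/

namespace RankedDelegation

/-!
Take voters 1 and 2 who rank each other first and a casting voter of their own (3 and 4
respectively) second. Lexicographically the rank sequence `[1, 2]` of the detour through the
other voter beats the sequence `[2]` of the direct edge, so depth-first delegation sends 1 along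
1 → 2 → 4 and 2 along 2 → 1 → 3. In the union of these paths voter 2 has the two outgoing edges
2 → 1 and 2 → 4.
-/

section Paths

variable {G : Instance} {v w : ℕ} {l p : List ℕ}

lemma IsDelegPath.exists_eq_cons_cons (hp : IsDelegPath G v p) : ∃ w l, p = v :: w :: l := by
  obtain ⟨hlen, hhead, -⟩ := hp
  match p, hlen, hhead with
  | _ :: w :: l, _, hhead => exact ⟨w, l, by simp_all⟩

lemma isDelegPath_cons_cons_iff :
    IsDelegPath G v (v :: w :: l) ↔
      (v, w) ∈ G.E ∧ v ∉ w :: l ∧ (w ∈ G.C ∧ l = [] ∨ IsDelegPath G w (w :: l)) := by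
  cases l <;>
    simp only [IsDelegPath, List.length_cons, List.length_nil, le_add_iff_nonneg_left, zero_le,
      List.head?_cons, List.nodup_cons, List.mem_cons, List.not_mem_nil, List.nodup_nil,
      List.tail_cons, List.zip_cons_cons, List.zip_nil_right, forall_eq_or_imp,
      Prod.forall, List.getLast?_cons_cons, List.getLast?_singleton, Option.some.injEq,
      exists_eq_right', not_or, reduceCtorEq] <;>
    tauto

lemma not_isDelegPath_of_mem_C (hv : v ∈ G.C) : ¬ IsDelegPath G v p := by
  intro hp
  obtain ⟨w, l, rfl⟩ := hp.exists_eq_cons_cons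
  exact G.C_no_out _ (isDelegPath_cons_cons_iff.1 hp).1 hv

lemma isDelegPath_cons_cons_iff_of_mem_C (hw : w ∈ G.C) :
    IsDelegPath G v (v :: w :: l) ↔ (v, w) ∈ G.E ∧ l = [] := by
  rw [isDelegPath_cons_cons_iff]
  refine ⟨fun ⟨hvw, _, hl⟩ ↦ ⟨hvw, ?_⟩, fun ⟨hvw, hl⟩ ↦ ⟨hvw, ?_, .inl ⟨hw, hl⟩⟩⟩
  · exact (hl.resolve_right (not_isDelegPath_of_mem_C hw)).2
  · simp only [hl, List.mem_singleton]
    rintro rfl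
    exact G.C_no_out _ hvw hw

end Paths

lemma IsSequenceRule.path_ne {f : DelegationRule} {R : List ℕ → List ℕ → Prop}
    (hf : IsSequenceRule f R) {G : Instance} {v : ℕ} (hv : Delegating G v) {p q : List ℕ}
    (hp : IsDelegPath G v p) (hne : seqOf G p ≠ seqOf G q) (hR : ¬ R (seqOf G q) (seqOf G p)) :
    f.path G v ≠ q := by
  rintro rfl
  exact hR ((hf.2 G v hv).2 _ ⟨p, hp, rfl⟩ hne)

/-- Voters `v` and `u` can delegate only to one another and to their own casting voters
`c` and `c'` respectively. -/
structure IsCrossedPair (G : Instance) (v u c c' : ℕ) : Prop where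
  mem_E_left : ∀ w, (v, w) ∈ G.E ↔ w = u ∨ w = c
  mem_E_right : ∀ w, (u, w) ∈ G.E ↔ w = v ∨ w = c'
  mem_C_left : c ∈ G.C
  mem_C_right : c' ∈ G.C
  ne : v ≠ u

namespace IsCrossedPair

variable {G : Instance} {v u c c' : ℕ} {p : List ℕ}

lemma symm (h : IsCrossedPair G v u c c') : IsCrossedPair G u v c' c :=
  ⟨h.mem_E_right, h.mem_E_left, h.mem_C_right, h.mem_C_left, h.ne.symm⟩

lemma isDelegPath_iff (h : IsCrossedPair G v u c c') :
    IsDelegPath G v p ↔ p = [v, c] ∨ p = [v, u, c'] := by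
  have hvu : (v, u) ∈ G.E := (h.mem_E_left u).2 (.inl rfl)
  have huv : (u, v) ∈ G.E := (h.mem_E_right v).2 (.inl rfl)
  constructor
  · intro hp
    obtain ⟨w, l, rfl⟩ := hp.exists_eq_cons_cons
    obtain ⟨hvw, hv, hl⟩ := isDelegPath_cons_cons_iff.1 hp
    rcases (h.mem_E_left w).1 hvw with hw | hw <;> subst w
    · have hl : IsDelegPath G u (u :: l) :=
        hl.resolve_left fun ⟨hw, _⟩ ↦ G.C_no_out _ huv hw
      obtain ⟨x, l, hcons⟩ := hl.exists_eq_cons_cons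
      obtain rfl := List.cons_injective hcons
      obtain ⟨hux, -, -⟩ := isDelegPath_cons_cons_iff.1 hl
      rcases (h.mem_E_right x).1 hux with hx | hx <;> subst x
      · simp at hv
      · simp [(isDelegPath_cons_cons_iff_of_mem_C h.mem_C_right).1 hl]
    · simp [(isDelegPath_cons_cons_iff_of_mem_C h.mem_C_left).1 hp]
  · rintro (rfl | rfl)
    · exact (isDelegPath_cons_cons_iff_of_mem_C h.mem_C_left).2
        ⟨(h.mem_E_left c).2 (.inr rfl), rfl⟩
    · have hvc' : v ≠ c' := fun hv ↦ G.C_no_out _ hvu (hv ▸ h.mem_C_right)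
      refine isDelegPath_cons_cons_iff.2 ⟨hvu, by simp [h.ne, hvc'], .inr ?_⟩
      exact (isDelegPath_cons_cons_iff_of_mem_C h.mem_C_right).2
        ⟨(h.mem_E_right c').2 (.inr rfl), rfl⟩

lemma delegating (h : IsCrossedPair G v u c c') : Delegating G v :=
  ⟨(G.edge_mem _ ((h.mem_E_left c).2 (.inr rfl))).1, [v, c], h.isDelegPath_iff.2 (.inl rfl)⟩

lemma dfd_path_eq {f : DelegationRule} (hf : IsSequenceRule f lexRel)
    (h : IsCrossedPair G v u c c') (hrank : G.rank (v, u) < G.rank (v, c)) :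
    f.path G v = [v, u, c'] := by
  have hne : seqOf G [v, u, c'] ≠ seqOf G [v, c] := by
    simp [seqOf, hrank.ne]
  have hlex : ¬ lexRel (seqOf G [v, c]) (seqOf G [v, u, c']) := by
    simp only [seqOf, lexRel, List.zip_cons_cons, List.tail_cons, List.zip_nil_right, List.map,
      List.cons_lex_cons_iff]
    omega
  exact (h.isDelegPath_iff.1 (f.valid G v h.delegating)).resolve_left
    (hf.path_ne h.delegating (h.isDelegPath_iff.2 (.inr rfl)) hne hlex)

end IsCrossedPair

def dfdCounterexample : Instance where
  V := {1, 2, 3, 4}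
  E := {(1, 2), (1, 3), (2, 1), (2, 4)}
  C := {3, 4}
  C_sub := by decide
  edge_mem := by decide
  C_no_out := by decide
  rank := fun e => if e = (1, 2) ∨ e = (2, 1) then 1 else 2
  rank_prop := by decide

lemma isCrossedPair_dfdCounterexample : IsCrossedPair dfdCounterexample 1 2 3 4 where
  mem_E_left w := by simp [dfdCounterexample]
  mem_E_right w := by simp [dfdCounterexample]
  mem_C_left := by decide
  mem_C_right := by decide
  ne := by decide

/-- depth-first delegation is not confluent. -/
theorem dfd_not_confluent (f : DelegationRule) (hf : IsSequenceRule f lexRel) :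
    ¬ Confluent f := by
  intro hconf
  have h₁ := isCrossedPair_dfdCounterexample
  have h₂ := h₁.symm
  have hp₁ : f.path dfdCounterexample 1 = [1, 2, 4] := h₁.dfd_path_eq hf (by decide)
  have hp₂ : f.path dfdCounterexample 2 = [2, 1, 3] := h₂.dfd_path_eq hf (by decide)
  obtain ⟨w, -, huniq⟩ := hconf dfdCounterexample 2 h₂.delegating
  have h₁w : 1 = w := huniq 1 ⟨2, h₂.delegating, by simp [hp₂]⟩
  have h₄w : 4 = w := huniq 4 ⟨1, h₁.delegating, by simp [hp₁]⟩
  omega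

end RankedDelegation
end

section
/- BordaBranching with priority-order tie-breaking satisfies guru-participation. -/
/-!
Formalization of the ranked-delegation (liquid democracy) setting of
"Liquid Democracy with Ranked Delegations".

Vertices are natural numbers.  An instance carries the vertex set `V`,
the edge set `E`, the distinguished set `C` of casting voters (which have
no outgoing edges), and a rank function such that for every vertex the
ranks of its outgoing edges are exactly `{1, ..., outdeg}`.
-/

namespace RankedDelegation

lemma walk_unique (C : Finset ℕ) (B : Finset (ℕ × ℕ))
    (hC : ∀ e ∈ B, e.1 ∉ C)
    (hun : ∀ e ∈ B, ∀ e' ∈ B, e.1 = e'.1 → e.2 = e'.2) :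
    ∀ p q : List ℕ, (∀ e ∈ p.zip p.tail, e ∈ B) → (∀ e ∈ q.zip q.tail, e ∈ B) →
      p.head? = q.head? → (∃ x ∈ C, p.getLast? = some x) → (∃ x ∈ C, q.getLast? = some x) →
      p = q := by
  intro p
  induction p with
  | nil =>
    intro q _ _ _ hl _
    obtain ⟨x, _, hx⟩ := hl; simp at hx
  | cons a p' ih =>
    intro q hp hq hhead hpl hql
    match q with
    | [] => obtain ⟨x, _, hx⟩ := hql; simp at hx
    | a' :: q' =>
      have ha : a = a' := by simpa using hhead
      subst ha
      cases p' with
      | nil =>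
        cases q' with
        | nil => rfl
        | cons b' q'' =>
          exfalso
          have hmem : (a, b') ∈ B := hq (a, b') (by simp)
          have haC : a ∈ C := by
            obtain ⟨x, hxC, hx⟩ := hpl; simp at hx; rwa [hx]
          exact hC _ hmem haC
      | cons b p'' =>
        cases q' with
        | nil =>
          exfalso
          have hmem : (a, b) ∈ B := hp (a, b) (by simp)
          have haC : a ∈ C := by
            obtain ⟨x, hxC, hx⟩ := hql; simp at hx; rwa [hx]
          exact hC _ hmem haC
        | cons b' q'' =>
          have hab : (a, b) ∈ B := hp (a, b) (by simp)
          have hab' : (a, b') ∈ B := hq (a, b') (by simp)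
          have hbb : b = b' := hun _ hab _ hab' rfl
          subst hbb
          have htail : (b :: p'') = (b :: q'') := by
            apply ih (b :: q'')
            · intro e he
              exact hp e (by simpa using Or.inr he)
            · intro e he
              exact hq e (by simpa using Or.inr he)
            · rfl
            · obtain ⟨x, hxC, hx⟩ := hpl
              exact ⟨x, hxC, by rwa [List.getLast?_cons_cons] at hx⟩
            · obtain ⟨x, hxC, hx⟩ := hql
              exact ⟨x, hxC, by rwa [List.getLast?_cons_cons] at hx⟩
          rw [htail]

lemma chain_prop {α : Type*} (Q : α → Prop) (S : α → α → Prop) (P : α → Prop) :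
    ∀ (l : List α) (a : α), List.Chain S a l → Q a → (∀ b ∈ l, Q b) →
      (∀ x y, Q x → Q y → S x y → P x → P y) → P a → ∀ b ∈ l, P b := by
  intro l
  induction l with
  | nil => simp
  | cons b t ih =>
    intro a hch hQa hQ step hPa x hx
    have hch : S a b ∧ List.Chain S b t := List.isChain_cons_cons.mp hch
    have hPb : P b := step a b hQa (hQ b (by simp)) hch.1 hPa
    rcases List.mem_cons.mp hx with rfl | hx
    · exact hPb
    · exact ih b hch.2 (hQ b (by simp)) (fun y hy => hQ y (by simp [hy])) step hPb x hx

lemma cycle_rotate (Bs : Finset (ℕ × ℕ)) (l₁ l₂ : List (ℕ × ℕ)) (e₀ : ℕ × ℕ)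
    (h : IsEdgeCycle Bs (l₁ ++ e₀ :: l₂)) : IsEdgeCycle Bs (e₀ :: (l₂ ++ l₁)) := by
  obtain ⟨hne, hmem, hch, e₁, e₂, hh, hl, hwrap⟩ := h
  replace hch := List.isChain_append.mp hch
  obtain ⟨hch1, hch2, hlink⟩ := hch
  have hlast2 : (l₁ ++ e₀ :: l₂).getLast? = (e₀ :: l₂).getLast? := by
    rw [List.getLast?_append]
    cases hx : (e₀ :: l₂).getLast? with
    | none => simp at hx
    | some x => simp
  refine ⟨by simp, ?_, ?_, e₀, ?_⟩
  · intro e he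
    apply hmem
    simp only [List.mem_cons, List.mem_append] at he ⊢
    tauto
  · show List.Chain' _ ((e₀ :: l₂) ++ l₁)
    apply List.isChain_append.mpr
    refine ⟨hch2, hch1, ?_⟩
    intro x hx y hy
    -- y is the head of l₁, so l₁ ≠ []
    cases l₁ with
    | nil => simp at hy
    | cons f l₁' =>
      have he₁ : e₁ = f := by
        simp only [List.cons_append, List.head?_cons] at hh
        exact (Option.some_injective _ hh).symm
      have hyf : y = f := by simpa using hy.symm
      have hxe₂ : x = e₂ := by
        rw [hlast2] at hl
        rw [hl] at hx
        simpa using hx.symm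
      rw [hyf, hxe₂, ← he₁]
      exact hwrap
  · cases l₁ with
    | nil =>
      have he₁ : e₁ = e₀ := by
        simp only [List.nil_append, List.head?_cons] at hh
        exact (Option.some_injective _ hh).symm
      refine ⟨e₂, rfl, ?_, by rw [he₁] at hwrap; exact hwrap⟩
      rw [hlast2] at hl
      simpa using hl
    | cons f l₁' =>
      obtain ⟨x, hx⟩ : ∃ x, (f :: l₁').getLast? = some x := ⟨(f :: l₁').getLast (by simp), List.getLast?_eq_getLast (by simp)⟩
      refine ⟨x, rfl, ?_, ?_⟩
      · show ((e₀ :: l₂) ++ (f :: l₁')).getLast? = some x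
        rw [List.getLast?_append, hx]
        rfl
      · exact hlink x hx e₀ rfl

lemma cycle_propagate (Hs : Finset (ℕ × ℕ)) (P : ℕ × ℕ → Prop) (l : List (ℕ × ℕ))
    (hl : IsEdgeCycle Hs l)
    (step : ∀ x y, x ∈ Hs → y ∈ Hs → x.2 = y.1 → P x → P y)
    (e₀ : ℕ × ℕ) (he₀ : e₀ ∈ l) (hP : P e₀) :
    ∃ l', IsEdgeCycle Hs l' ∧ ∀ e ∈ l', P e := by
  obtain ⟨l₁, l₂, rfl⟩ := List.append_of_mem he₀
  have hrot := cycle_rotate Hs l₁ l₂ e₀ hl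
  refine ⟨_, hrot, ?_⟩
  obtain ⟨hne, hmem, hch, _⟩ := hrot
  have hch2 : List.Chain (fun x y => x.2 = y.1) e₀ (l₂ ++ l₁) := hch
  intro e he
  rcases List.mem_cons.mp he with rfl | he
  · exact hP
  · exact chain_prop (fun x => x ∈ Hs) _ P (l₂ ++ l₁) e₀ hch2
      (hmem e₀ (by simp)) (fun b hb => hmem b (by simp [hb])) step hP e he
lemma casting_not_delegating (G : Instance) {x : ℕ} (hx : x ∈ G.C) : ¬ Delegating G x := by
  rintro ⟨hxV, p, hlen, hhead, hnd, hedge, _⟩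
  match p, hlen, hhead with
  | a :: b :: t, _, hhead =>
    have ha : a = x := by simpa using hhead
    subst ha
    exact G.C_no_out (a, b) (hedge (a, b) (by simp)) hx

-- Hybrid edge set: edges of `B₁` whose tail satisfies `Q`, edges of `B₂` otherwise.
open Classical in
noncomputable def hybrid (Q : ℕ → Prop) (B₁ B₂ : Finset (ℕ × ℕ)) : Finset (ℕ × ℕ) :=
  B₁.filter (fun e => Q e.1) ∪ B₂.filter (fun e => ¬ Q e.1)

lemma mem_hybrid {Q : ℕ → Prop} {B₁ B₂ : Finset (ℕ × ℕ)} {e : ℕ × ℕ} :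
    e ∈ hybrid Q B₁ B₂ ↔ (e ∈ B₁ ∧ Q e.1) ∨ (e ∈ B₂ ∧ ¬ Q e.1) := by
  simp [hybrid, Finset.mem_union, Finset.mem_filter]

lemma rankOut_hybrid_pos (G : Instance) (Q : ℕ → Prop) (B₁ B₂ : Finset (ℕ × ℕ)) (w : ℕ)
    (hw : Q w) : rankOut G (hybrid Q B₁ B₂) w = rankOut G B₁ w := by
  classical
  unfold rankOut
  congr 1
  ext e
  simp only [Finset.mem_filter, mem_hybrid]
  constructor
  · rintro ⟨h1 | h2, he⟩
    · exact ⟨h1.1, he⟩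
    · exact absurd (he ▸ hw) h2.2
  · rintro ⟨h, he⟩
    exact ⟨Or.inl ⟨h, he ▸ hw⟩, he⟩

lemma rankOut_hybrid_neg (G : Instance) (Q : ℕ → Prop) (B₁ B₂ : Finset (ℕ × ℕ)) (w : ℕ)
    (hw : ¬ Q w) : rankOut G (hybrid Q B₁ B₂) w = rankOut G B₂ w := by
  classical
  unfold rankOut
  congr 1
  ext e
  simp only [Finset.mem_filter, mem_hybrid]
  constructor
  · rintro ⟨h1 | h2, he⟩
    · exact absurd h1.2 (he ▸ hw)
    · exact ⟨h2.1, he⟩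
  · rintro ⟨h, he⟩
    exact ⟨Or.inr ⟨h, he ▸ hw⟩, he⟩

open Classical in
lemma score_hybrid (G : Instance) (Q : ℕ → Prop) (B₁ B₂ : Finset (ℕ × ℕ)) :
    score G (hybrid Q B₁ B₂) =
      (B₁.filter (fun e => Q e.1)).sum G.rank + (B₂.filter (fun e => ¬ Q e.1)).sum G.rank := by
  unfold score hybrid
  apply Finset.sum_union
  rw [Finset.disjoint_left]
  intro e he1 he2
  simp only [Finset.mem_filter] at he1 he2
  exact he2.2 he1.2

open Classical in
lemma score_split (G : Instance) (Q : ℕ → Prop) (B : Finset (ℕ × ℕ)) :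
    score G B = (B.filter (fun e => Q e.1)).sum G.rank + (B.filter (fun e => ¬ Q e.1)).sum G.rank := by
  unfold score
  rw [Finset.sum_filter_add_sum_filter_not]

/-- Tails of branching edges are not casting. -/
lemma branch_tail_not_casting (G : Instance) (B : Finset (ℕ × ℕ))
    (hBr : ∀ e ∈ B, InReduced G e) : ∀ e ∈ B, e.1 ∉ G.C :=
  fun e he hc => G.C_no_out e (hBr e he).1 hc

/-- Tails of branching edges are delegating. -/
lemma branch_tail_deleg (G : Instance) (B : Finset (ℕ × ℕ))
    (hBr : ∀ e ∈ B, InReduced G e) : ∀ e ∈ B, Delegating G e.1 := by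
  intro e he
  rcases (hBr e he).2.1 with h | h
  · exact absurd h (branch_tail_not_casting G B hBr e he)
  · exact h

lemma branch_unique_head (G : Instance) (B : Finset (ℕ × ℕ))
    (hBr : ∀ e ∈ B, InReduced G e)
    (hBu : ∀ w : ℕ, Delegating G w → ∃! x : ℕ, (w, x) ∈ B) :
    ∀ e ∈ B, ∀ e' ∈ B, e.1 = e'.1 → e.2 = e'.2 := by
  intro e he e' he' h
  obtain ⟨x, _, hx⟩ := hBu e.1 (branch_tail_deleg G B hBr e he)
  have h1 : e.2 = x := hx e.2 (show (e.1, e.2) ∈ B by rw [Prod.mk.eta]; exact he)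
  have h2 : e'.2 = x := hx e'.2 (show (e.1, e'.2) ∈ B by rw [h, Prod.mk.eta]; exact he')
  rw [h1, h2]

/-- The path selected by `f` is the unique `B`-walk from `d` to `C`. -/
lemma path_unique_of_walk (f : DelegationRule) (G : Instance) (B : Finset (ℕ × ℕ))
    (hBr : ∀ e ∈ B, InReduced G e)
    (hBu : ∀ w : ℕ, Delegating G w → ∃! x : ℕ, (w, x) ∈ B)
    (hBpath : ∀ w : ℕ, Delegating G w → ∀ e ∈ (f.path G w).zip (f.path G w).tail, e ∈ B)
    {d : ℕ} (hd : Delegating G d) {q : List ℕ}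
    (hq : ∀ e ∈ q.zip q.tail, e ∈ B) (hhead : q.head? = some d)
    (hlast : ∃ x ∈ G.C, q.getLast? = some x) : f.path G d = q := by
  obtain ⟨hlen, hh, hnd, hedge, hl⟩ := f.valid G d hd
  exact walk_unique G.C B (branch_tail_not_casting G B hBr) (branch_unique_head G B hBr hBu)
    (f.path G d) q (hBpath d hd) hq (by rw [hh, hhead]) hl hlast

/-- Walking one `B`-edge prepends the tail to the path of the head. -/
lemma path_step (f : DelegationRule) (G : Instance) (B : Finset (ℕ × ℕ))
    (hBr : ∀ e ∈ B, InReduced G e)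
    (hBu : ∀ w : ℕ, Delegating G w → ∃! x : ℕ, (w, x) ∈ B)
    (hBpath : ∀ w : ℕ, Delegating G w → ∀ e ∈ (f.path G w).zip (f.path G w).tail, e ∈ B)
    {e : ℕ × ℕ} (he : e ∈ B) (he2 : e.2 ∉ G.C) :
    Delegating G e.1 ∧ Delegating G e.2 ∧
      (f.path G e.1).getLast? = (f.path G e.2).getLast? := by
  have hd1 : Delegating G e.1 := branch_tail_deleg G B hBr e he
  have hd2 : Delegating G e.2 := by
    rcases (hBr e he).2.2 with h | h
    · exact absurd h he2
    · exact h
  obtain ⟨hlen2, hh2, hnd2, hedge2, hl2⟩ := f.valid G e.2 hd2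
  obtain ⟨t, ht⟩ : ∃ t, f.path G e.2 = e.2 :: t := by
    cases hp : f.path G e.2 with
    | nil => rw [hp] at hh2; simp at hh2
    | cons x t =>
      rw [hp] at hh2
      simp at hh2
      exact ⟨t, by rw [hh2]⟩
  refine ⟨hd1, hd2, ?_⟩
  have hcons : f.path G e.1 = e.1 :: f.path G e.2 := by
    apply path_unique_of_walk f G B hBr hBu hBpath hd1
    · intro e' he'
      rw [ht] at he'
      simp only [List.tail_cons, List.zip_cons_cons, List.mem_cons] at he'
      rcases he' with rfl | he'
      · rwa [Prod.mk.eta]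
      · exact hBpath e.2 hd2 e' (by rw [ht]; simpa using he')
    · simp
    · obtain ⟨x, hxC, hx⟩ := hl2
      refine ⟨x, hxC, ?_⟩
      rw [ht] at hx
      rw [ht, List.getLast?_cons_cons]
      exact hx
  rw [hcons, ht, List.getLast?_cons_cons, ← ht]
/-- BordaBranching with priority-order tie-breaking satisfies
guru-participation. -/
theorem borda_branching_guru_participation (f : DelegationRule) (pi : ℕ → ℕ)
    (hf : IsBordaBranching f pi) : GuruParticipation f := by
  classical
  obtain ⟨hπ, hspec⟩ := hf
  intro G G' v c hv hvc hV hC hrank hE u hu huc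
  obtain ⟨B, hBb, hBmin, hBtie, hBpath⟩ := hspec G
  obtain ⟨B', hB'b, hB'min, hB'tie, hB'path⟩ := hspec G'
  have hBred := hBb.1
  have hBacyc := hBb.2.1
  have hBuniq := hBb.2.2
  have hB'red := hB'b.1
  have hB'acyc := hB'b.2.1
  have hB'uniq := hB'b.2.2
  have hE' : ∀ e : ℕ × ℕ, e ∈ G'.E ↔ e ∈ G.E ∧ e.1 ≠ v := by
    intro e; rw [hE, Finset.mem_filter]
  have hPath' : ∀ x p, IsDelegPath G' x p → IsDelegPath G x p := by
    rintro x p ⟨h1, h2, h3, h4, cx, hcx, h5⟩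
    exact ⟨h1, h2, h3, fun e he => ((hE' e).1 (h4 e he)).1, cx, hC ▸ hcx, h5⟩
  have hDel' : ∀ x, Delegating G' x → Delegating G x := by
    rintro x ⟨hxV, p, hp⟩
    exact ⟨by rw [← hV]; exact hxV, p, hPath' x p hp⟩
  set A : ℕ → Prop := fun d => Delegating G d ∧ (f.path G d).getLast? ≠ some c with hA
  have hvA : ¬ A v := fun h => h.2 hvc
  -- A is closed under B-successors and B-ancestors
  have hF1 : ∀ e ∈ B, A e.1 → e.2 ∉ G.C → A e.2 := by
    intro e he h1 h2
    obtain ⟨hd1, hd2, hstep⟩ := path_step f G B hBred hBuniq hBpath he h2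
    exact ⟨hd2, by rw [← hstep]; exact h1.2⟩
  have hF2 : ∀ e ∈ B, A e.2 → A e.1 := by
    intro e he h2
    have h2C : e.2 ∉ G.C := fun hc => casting_not_delegating G hc h2.1
    obtain ⟨hd1, hd2, hstep⟩ := path_step f G B hBred hBuniq hBpath he h2C
    exact ⟨hd1, by rw [hstep]; exact h2.2⟩
  -- walks from A stay in A
  have walkA : ∀ (p : List ℕ) (a : ℕ), p.head? = some a → A a →
      (∀ e ∈ p.zip p.tail, e ∈ B) → ∀ e ∈ p.zip p.tail, e ∈ B ∧ A e.1 := by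
    intro p
    induction p with
    | nil => intro a _ _ _ e he; simp at he
    | cons x t ih =>
      intro a hhead hAa hedges e he
      have hxa : x = a := by simpa using hhead
      subst hxa
      cases t with
      | nil => simp at he
      | cons b t' =>
        have hzip : (x :: b :: t').zip (x :: b :: t').tail = (x, b) :: ((b :: t').zip t') := rfl
        have hxb : (x, b) ∈ B := hedges (x, b) (by rw [hzip]; simp)
        rw [hzip] at he
        rcases List.mem_cons.mp he with rfl | he'
        · exact ⟨hxb, hAa⟩
        · by_cases hbC : b ∈ G.C
          · exfalso
            cases t' with
            | nil => simp at he'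
            | cons b2 t'' =>
              have hb2 : (b, b2) ∈ B := hedges (b, b2) (by rw [hzip]; simp)
              exact branch_tail_not_casting G B hBred _ hb2 hbC
          · exact ih b rfl (hF1 (x, b) hxb hAa hbC)
              (fun e' he'' => hedges e' (by rw [hzip]; exact List.mem_cons_of_mem _ he'')) e he'
  have hAD' : ∀ d, A d → Delegating G' d := by
    intro d hd
    obtain ⟨hlen, hhead, hnd, hedges, hlast⟩ := f.valid G d hd.1
    refine ⟨by rw [hV]; exact hd.1.1, f.path G d, hlen, hhead, hnd, ?_, ?_⟩
    · intro e he
      obtain ⟨heB, heA⟩ := walkA (f.path G d) d hhead hd (hBpath d hd.1) e he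
      refine (hE' e).2 ⟨(hBred e heB).1, ?_⟩
      intro hev; rw [hev] at heA; exact hvA heA
    · obtain ⟨x, hxC, hx⟩ := hlast; exact ⟨x, by rw [hC]; exact hxC, hx⟩
  -- the two hybrid branchings
  have hHred : ∀ e ∈ hybrid A B' B, InReduced G e := by
    intro e he
    rcases mem_hybrid.mp he with ⟨heB', _⟩ | ⟨heB, _⟩
    · obtain ⟨h1, h2, h3⟩ := hB'red e heB'
      refine ⟨((hE' e).1 h1).1, ?_, ?_⟩
      · rcases h2 with h | h
        · exact Or.inl (hC ▸ h)
        · exact Or.inr (hDel' _ h)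
      · rcases h3 with h | h
        · exact Or.inl (hC ▸ h)
        · exact Or.inr (hDel' _ h)
    · exact hBred e heB
  have hHacyc : Acyclic (hybrid A B' B) := by
    rintro ⟨l, hcyc⟩
    obtain ⟨hne, hmem, hch, hwr⟩ := hcyc
    by_cases hall : ∀ e ∈ l, A e.1
    · apply hB'acyc
      refine ⟨l, hne, ?_, hch, hwr⟩
      intro e he
      rcases mem_hybrid.mp (hmem e he) with ⟨h, _⟩ | ⟨_, hn⟩
      · exact h
      · exact absurd (hall e he) hn
    · push_neg at hall
      obtain ⟨e₀, he₀, he₀A⟩ := hall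
      have hstep : ∀ x y : ℕ × ℕ, x ∈ hybrid A B' B → y ∈ hybrid A B' B → x.2 = y.1 →
          ¬ A x.1 → ¬ A y.1 := by
        intro x y hxH hyH hxy hPx hAy
        have hxB : x ∈ B := by
          rcases mem_hybrid.mp hxH with ⟨_, hA2⟩ | ⟨h, _⟩
          · exact absurd hA2 hPx
          · exact h
        exact hPx (hF2 x hxB (by rw [hxy]; exact hAy))
      obtain ⟨l', hcyc', hallP⟩ := cycle_propagate (hybrid A B' B) (fun e => ¬ A e.1) l
        ⟨hne, hmem, hch, hwr⟩ hstep e₀ he₀ he₀A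
      apply hBacyc
      obtain ⟨hne', hmem', hch', hwr'⟩ := hcyc'
      refine ⟨l', hne', ?_, hch', hwr'⟩
      intro e he
      rcases mem_hybrid.mp (hmem' e he) with ⟨_, hA2⟩ | ⟨h, _⟩
      · exact absurd hA2 (hallP e he)
      · exact h
  have hHuniq : ∀ w, Delegating G w → ∃! x, (w, x) ∈ hybrid A B' B := by
    intro w hw
    by_cases hAw : A w
    · obtain ⟨x, hx, hxu⟩ := hB'uniq w (hAD' w hAw)
      refine ⟨x, mem_hybrid.mpr (Or.inl ⟨hx, hAw⟩), ?_⟩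
      intro y hy
      rcases mem_hybrid.mp hy with ⟨h, _⟩ | ⟨_, hn⟩
      · exact hxu y h
      · exact absurd hAw hn
    · obtain ⟨x, hx, hxu⟩ := hBuniq w hw
      refine ⟨x, mem_hybrid.mpr (Or.inr ⟨hx, hAw⟩), ?_⟩
      intro y hy
      rcases mem_hybrid.mp hy with ⟨_, hA⟩ | ⟨h, _⟩
      · exact absurd hA hAw
      · exact hxu y h
  have hHb : IsCBranching G (hybrid A B' B) := ⟨hHred, hHacyc, hHuniq⟩
  have hH'red : ∀ e ∈ hybrid A B B', InReduced G' e := by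
    intro e he
    rcases mem_hybrid.mp he with ⟨heB, heA⟩ | ⟨heB', _⟩
    · refine ⟨(hE' e).2 ⟨(hBred e heB).1, fun hev => hvA (hev ▸ heA)⟩, Or.inr (hAD' _ heA), ?_⟩
      by_cases h2C : e.2 ∈ G.C
      · exact Or.inl (by rw [hC]; exact h2C)
      · exact Or.inr (hAD' _ (hF1 e heB heA h2C))
    · exact hB'red e heB'
  have hH'acyc : Acyclic (hybrid A B B') := by
    rintro ⟨l, hcyc⟩
    obtain ⟨hne, hmem, hch, hwr⟩ := hcyc
    by_cases hsome : ∃ e ∈ l, A e.1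
    · obtain ⟨e₀, he₀, he₀A⟩ := hsome
      have hstep : ∀ x y : ℕ × ℕ, x ∈ hybrid A B B' → y ∈ hybrid A B B' → x.2 = y.1 →
          A x.1 → A y.1 := by
        intro x y hxH hyH hxy hPx
        have hxB : x ∈ B := by
          rcases mem_hybrid.mp hxH with ⟨h, _⟩ | ⟨_, hn⟩
          · exact h
          · exact absurd hPx hn
        have hy1C : y.1 ∉ G.C := by
          rcases mem_hybrid.mp hyH with ⟨h, _⟩ | ⟨h, _⟩
          · exact branch_tail_not_casting G B hBred y h
          · intro hyc
            exact branch_tail_not_casting G' B' hB'red y h (by rw [hC]; exact hyc)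
        have h2 := hF1 x hxB hPx (by rw [hxy]; exact hy1C)
        rw [hxy] at h2
        exact h2
      obtain ⟨l', hcyc', hallP⟩ := cycle_propagate (hybrid A B B') (fun e => A e.1) l
        ⟨hne, hmem, hch, hwr⟩ hstep e₀ he₀ he₀A
      apply hBacyc
      obtain ⟨hne', hmem', hch', hwr'⟩ := hcyc'
      refine ⟨l', hne', ?_, hch', hwr'⟩
      intro e he
      rcases mem_hybrid.mp (hmem' e he) with ⟨h, _⟩ | ⟨_, hn⟩
      · exact h
      · exact absurd (hallP e he) hn
    · push_neg at hsome
      apply hB'acyc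
      refine ⟨l, hne, ?_, hch, hwr⟩
      intro e he
      rcases mem_hybrid.mp (hmem e he) with ⟨_, hA⟩ | ⟨h, _⟩
      · exact absurd hA (hsome e he)
      · exact h
  have hH'uniq : ∀ w, Delegating G' w → ∃! x, (w, x) ∈ hybrid A B B' := by
    intro w hw
    by_cases hAw : A w
    · obtain ⟨x, hx, hxu⟩ := hBuniq w hAw.1
      refine ⟨x, mem_hybrid.mpr (Or.inl ⟨hx, hAw⟩), ?_⟩
      intro y hy
      rcases mem_hybrid.mp hy with ⟨h, _⟩ | ⟨_, hn⟩
      · exact hxu y h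
      · exact absurd hAw hn
    · obtain ⟨x, hx, hxu⟩ := hB'uniq w hw
      refine ⟨x, mem_hybrid.mpr (Or.inr ⟨hx, hAw⟩), ?_⟩
      intro y hy
      rcases mem_hybrid.mp hy with ⟨_, hA⟩ | ⟨h, _⟩
      · exact absurd hA hAw
      · exact hxu y h
  have hH'b : IsCBranching G' (hybrid A B B') := ⟨hH'red, hH'acyc, hH'uniq⟩
  -- score comparison
  have hsc1 := score_hybrid G A B' B
  have hsc2 := score_split G A B
  have hsc3 := score_hybrid G' A B B'
  have hsc4 := score_split G' A B'
  rw [hrank] at hsc3 hsc4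
  have hle1 : score G B ≤ score G (hybrid A B' B) := hBmin (hybrid A B' B) hHb
  have hle2 : score G' B' ≤ score G' (hybrid A B B') := hB'min (hybrid A B B') hH'b
  have hss : score G (hybrid A B' B) + score G' (hybrid A B B') = score G B + score G' B' := by
    rw [hsc1, hsc2, hsc3, hsc4]; ring
  have hscoreH : score G (hybrid A B' B) = score G B := by omega
  have hscoreH' : score G' (hybrid A B B') = score G' B' := by omega
  have hro' : ∀ (X : Finset (ℕ × ℕ)) (w : ℕ), rankOut G' X w = rankOut G X w := by
    intro X w; unfold rankOut; rw [hrank]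
  -- B and B' agree on A
  have hEqA : ∀ e ∈ B, A e.1 → e ∈ B' := by
    by_contra hcon
    push_neg at hcon
    obtain ⟨e₀, he₀B, he₀A, he₀nB'⟩ := hcon
    have hHne : hybrid A B' B ≠ B := by
      intro hHB
      have he₀H : e₀ ∈ hybrid A B' B := by rw [hHB]; exact he₀B
      rcases mem_hybrid.mp he₀H with ⟨h, _⟩ | ⟨_, hn⟩
      · exact he₀nB' h
      · exact hn he₀A
    have hH'ne : hybrid A B B' ≠ B' := by
      intro hH'B'
      have he₀H' : e₀ ∈ hybrid A B B' := mem_hybrid.mpr (Or.inl ⟨he₀B, he₀A⟩)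
      rw [hH'B'] at he₀H'
      exact he₀nB' he₀H'
    obtain ⟨v₀, hv₀d, hv₀lt, hv₀eq⟩ := hBtie (hybrid A B' B) hHb hscoreH hHne
    obtain ⟨v₁, hv₁d, hv₁lt, hv₁eq⟩ := hB'tie (hybrid A B B') hH'b hscoreH' hH'ne
    have hv₀A : A v₀ := by
      by_contra h
      rw [rankOut_hybrid_neg G A B' B v₀ h] at hv₀lt
      exact lt_irrefl _ hv₀lt
    have hv₁A : A v₁ := by
      by_contra h
      rw [hro' (hybrid A B B') v₁, hro' B' v₁, rankOut_hybrid_neg G A B B' v₁ h] at hv₁lt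
      exact lt_irrefl _ hv₁lt
    rw [rankOut_hybrid_pos G A B' B v₀ hv₀A] at hv₀lt
    rw [hro' (hybrid A B B') v₁, hro' B' v₁, rankOut_hybrid_pos G A B B' v₁ hv₁A] at hv₁lt
    rcases lt_trichotomy (pi v₀) (pi v₁) with h | h | h
    · have heq := hv₁eq v₀ (hAD' v₀ hv₀A) h
      rw [hro' (hybrid A B B') v₀, hro' B' v₀, rankOut_hybrid_pos G A B B' v₀ hv₀A] at heq
      omega
    · have hv01 : v₀ = v₁ := hπ h
      rw [hv01] at hv₀lt
      omega
    · have heq := hv₀eq v₁ hv₁A.1 h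
      rw [rankOut_hybrid_pos G A B' B v₁ hv₁A] at heq
      omega
  -- paths of A-voters are preserved
  have hpath' : ∀ d, A d → f.path G' d = f.path G d := by
    intro d hd
    have hd' : Delegating G' d := hAD' d hd
    apply path_unique_of_walk f G' B' hB'red hB'uniq hB'path hd'
    · intro e he
      obtain ⟨heB, heA⟩ := walkA (f.path G d) d (f.valid G d hd.1).2.1 hd (hBpath d hd.1) e he
      exact hEqA e heB heA
    · exact (f.valid G d hd.1).2.1
    · obtain ⟨x, hxC, hx⟩ := (f.valid G d hd.1).2.2.2.2
      exact ⟨x, by rw [hC]; exact hxC, hx⟩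
  -- weight comparison
  have hsub1 : {d | Delegating G d ∧ (f.path G d).getLast? = some u} ⊆
      {d | Delegating G' d ∧ (f.path G' d).getLast? = some u} := by
    rintro d ⟨hdel, hlast⟩
    have hdA : A d := ⟨hdel, by rw [hlast]; intro hcon; exact huc (Option.some.inj hcon)⟩
    exact ⟨hAD' d hdA, by rw [hpath' d hdA, hlast]⟩
  have hsub2 : {d : ℕ | Delegating G' d} ⊆ {d : ℕ | Delegating G d} := fun d hd => hDel' d hd
  have hfinT1 : {d : ℕ | Delegating G d}.Finite :=
    Set.Finite.subset G.V.finite_toSet (fun d hd => hd.1)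
  have hfinS2 : {d | Delegating G' d ∧ (f.path G' d).getLast? = some u}.Finite :=
    Set.Finite.subset G'.V.finite_toSet (fun d hd => hd.1.1)
  unfold weight
  rw [hC]
  have hk : (1 : ℚ) ≤ (G.C.card : ℚ) := by
    have h1 : 1 ≤ G.C.card := Finset.card_pos.mpr ⟨u, hu⟩
    exact_mod_cast h1
  apply div_le_div₀
  · positivity
  · have h1 : Set.ncard {d | Delegating G d ∧ (f.path G d).getLast? = some u} ≤
        Set.ncard {d | Delegating G' d ∧ (f.path G' d).getLast? = some u} :=
      Set.ncard_le_ncard hsub1 hfinS2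
    have h2 := (Nat.cast_le (α := ℚ)).mpr h1
    linarith
  · have h0 : (0:ℚ) ≤ (Set.ncard {d : ℕ | Delegating G' d} : ℚ) := by positivity
    linarith
  · have h1 : Set.ncard {d : ℕ | Delegating G' d} ≤ Set.ncard {d : ℕ | Delegating G d} :=
      Set.ncard_le_ncard hsub2 hfinT1
    have h2 := (Nat.cast_le (α := ℚ)).mpr h1
    linarith
end RankedDelegation
end
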